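/- arXiv:2508.21780 — 6 statements merged into one kernel-verified Lean document; each statement's English description precedes it below -/
import Mathlib

section
/- Let f : [0,∞) → [0,∞) be nondecreasing, right-continuous, and regularly varying at ∞ of index α > 0. Then for every integer j ≥ 1, the j-fold Lebesgue–Stieltjes convolution f^{*(j)} is regularly varying at ∞ of index αj. -/
open MeasureTheory Set Filter Topology

/-- Convolution of two (Borel) measures on `ℝ`. -/
noncomputable def mconv (μ ν : MeasureTheory.Measure ℝ) : MeasureTheory.Measure ℝ :=
  MeasureTheory.Measure.map (fun p : ℝ × ℝ => p.1 + p.2) (μ.prod ν)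

/-- `j`-fold convolution power of a measure on `ℝ`. -/
noncomputable def mconvPow (μ : MeasureTheory.Measure ℝ) : ℕ → MeasureTheory.Measure ℝ
  | 0 => MeasureTheory.Measure.dirac 0
  | 1 => μ
  | n + 2 => mconv μ (mconvPow μ (n + 1))

/-- The `j`-fold Lebesgue–Stieltjes convolution of the nondecreasing right-continuous
function `f` (vanishing at `0⁻`) represented by the measure `μ`, i.e. `f t = μ (Iic t)`. -/
noncomputable def convFun (μ : MeasureTheory.Measure ℝ) (j : ℕ) (t : ℝ) : ℝ :=
  ((mconvPow μ j) (Set.Iic t)).toReal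

/-!
Write `F`, `G` for the distribution functions of `μ`, `ν`, both supported on `[0, ∞)`.
Cutting `[0, t]` into `n` equal pieces traps `(μ ∗ ν)(-∞, t]` between lower and upper
Riemann–Stieltjes sums of `∫₀¹ F((1 - u) t) dG(u t)`. Divided by `F t * G t`, these sums tend
by regular variation to the corresponding sums for `∫₀¹ (1 - u)^α d(u^β)`, and the gap between
the two vanishes as the mesh shrinks. Hence `(μ ∗ ν)(-∞, t] ~ c F(t) G(t)` with `c > 0`, which is
regularly varying of index `α + β`; induction on `j` gives the theorem.
-/

def RegVarying (F : ℝ → ℝ) (α : ℝ) : Prop :=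
  ∀ lam : ℝ, 0 < lam → Tendsto (fun t => F (lam * t) / F t) atTop (𝓝 (lam ^ α))

namespace RegVarying

variable {F G H K : ℝ → ℝ} {α β : ℝ}

lemma eventually_ne_zero (hF : RegVarying F α) : ∀ᶠ t in atTop, F t ≠ 0 := by
  have h1 : Tendsto (fun t => F t / F t) atTop (𝓝 1) := by simpa using hF 1 one_pos
  filter_upwards [h1.eventually_ne one_ne_zero] with t ht h0
  simp [h0] at ht

lemma mul (hF : RegVarying F α) (hG : RegVarying G β) : RegVarying (F * G) (α + β) := by
  intro lam hlam
  rw [Real.rpow_add hlam]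
  simpa only [Pi.mul_apply, mul_div_mul_comm] using (hF lam hlam).mul (hG lam hlam)

lemma of_tendsto_div (hK : RegVarying K α) {c : ℝ} (hc : c ≠ 0)
    (h : Tendsto (fun t => H t / K t) atTop (𝓝 c)) : RegVarying H α := by
  intro lam hlam
  have hlamt : Tendsto (fun t => lam * t) atTop atTop := tendsto_id.const_mul_atTop hlam
  have hlim := ((h.comp hlamt).div h hc).mul (hK lam hlam)
  rw [div_self hc, one_mul] at hlim
  refine hlim.congr' ?_
  filter_upwards [hK.eventually_ne_zero, hlamt.eventually hK.eventually_ne_zero] with t ht hlt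
  by_cases hH : H t = 0
  · simp [hH]
  · simp only [Pi.div_apply, Function.comp_apply]
    field_simp

lemma tendsto_atTop (hF : RegVarying F α) (hα : 0 < α) (hmono : Monotone F) (hnn : 0 ≤ F) :
    Tendsto F atTop atTop := by
  -- A bounded `F` would converge to a positive limit, forcing `F (2 t) / F t → 1 ≠ 2 ^ α`.
  rw [tendsto_atTop_atTop_iff_of_monotone hmono]
  by_contra! hbounded
  obtain ⟨b, hb⟩ := hbounded
  have hbdd : BddAbove (range F) := ⟨b, by rintro _ ⟨a, rfl⟩; exact (hb a).le⟩
  have hlim : Tendsto F atTop (𝓝 (⨆ t, F t)) := tendsto_atTop_ciSup hmono hbdd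
  obtain ⟨t₀, ht₀⟩ := hF.eventually_ne_zero.exists
  have hsup : 0 < ⨆ t, F t := ((hnn t₀).lt_of_ne' ht₀).trans_le (le_ciSup hbdd t₀)
  have h2 := (hlim.comp (tendsto_id.const_mul_atTop two_pos)).div hlim hsup.ne'
  rw [div_self hsup.ne'] at h2
  exact (Real.one_lt_rpow one_lt_two hα).ne' (tendsto_nhds_unique (hF 2 two_pos) h2)

lemma tendsto_mul_div (hF : RegVarying F α) (hα : α ≠ 0) (htop : Tendsto F atTop atTop)
    {s : ℝ} (hs : 0 ≤ s) : Tendsto (fun t => F (s * t) / F t) atTop (𝓝 (s ^ α)) := by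
  rcases hs.eq_or_lt with rfl | hs
  · simpa [Real.zero_rpow hα] using tendsto_const_nhds.div_atTop htop
  · exact hF s hs

lemma tendsto_sum_div_mul {ι : Type*} (hF : RegVarying F α) (hG : RegVarying G β) (hα : α ≠ 0)
    (hβ : β ≠ 0) (hFtop : Tendsto F atTop atTop) (hGtop : Tendsto G atTop atTop)
    (s : Finset ι) {a b c : ι → ℝ} (ha : ∀ i ∈ s, 0 ≤ a i) (hb : ∀ i ∈ s, 0 ≤ b i)
    (hc : ∀ i ∈ s, 0 ≤ c i) :
    Tendsto (fun t => (∑ i ∈ s, F (a i * t) * (G (b i * t) - G (c i * t))) / (F t * G t))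
      atTop (𝓝 (∑ i ∈ s, a i ^ α * (b i ^ β - c i ^ β))) := by
  have hlim := tendsto_finsetSum s fun i hi =>
    (hF.tendsto_mul_div hα hFtop (ha i hi)).mul
      ((hG.tendsto_mul_div hβ hGtop (hb i hi)).sub (hG.tendsto_mul_div hβ hGtop (hc i hi)))
  refine hlim.congr fun t => ?_
  rw [Finset.sum_div]
  exact Finset.sum_congr rfl fun i _ => by rw [div_sub_div_same, div_mul_div_comm]

end RegVarying

lemma exists_tendsto_of_squeeze {α ι : Type*} {l : Filter α} [l.NeBot] {r : α → ℝ}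
    {lo up : ι → α → ℝ} {cL cU : ι → ℝ} (hlo : ∀ i, Tendsto (lo i) l (𝓝 (cL i)))
    (hup : ∀ i, Tendsto (up i) l (𝓝 (cU i))) (hlo_le : ∀ i, lo i ≤ᶠ[l] r)
    (hle_up : ∀ i, r ≤ᶠ[l] up i) (hgap : ∀ ε > 0, ∃ i, cU i ≤ cL i + ε) :
    ∃ c, (∀ i, cL i ≤ c) ∧ Tendsto r l (𝓝 c) := by
  obtain ⟨i₀, -⟩ := hgap 1 one_pos
  have hbdd : IsBoundedUnder (· ≤ ·) l r := (hup i₀).isBoundedUnder_le.mono_le (hle_up i₀)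
  have hbdd' : IsBoundedUnder (· ≥ ·) l r := (hlo i₀).isBoundedUnder_ge.mono_ge (hlo_le i₀)
  have hsup : ∀ i, limsup r l ≤ cU i := fun i =>
    (limsup_le_limsup (hle_up i) hbdd'.isCoboundedUnder_le (hup i).isBoundedUnder_le).trans_eq
      (hup i).limsup_eq
  have hinf : ∀ i, cL i ≤ liminf r l := fun i =>
    (hlo i).liminf_eq.symm.trans_le
      (liminf_le_liminf (hlo_le i) (hlo i).isBoundedUnder_ge hbdd.isCoboundedUnder_ge)
  have hsup_le : limsup r l ≤ liminf r l := le_of_forall_pos_le_add fun ε hε => by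
    obtain ⟨i, hi⟩ := hgap ε hε
    linarith [hsup i, hinf i]
  exact ⟨liminf r l, hinf, tendsto_of_le_liminf_of_limsup_le le_rfl hsup_le hbdd hbdd'⟩

open Finset

lemma exists_sum_sub_mul_sub_le {g h : ℝ → ℝ} (hg : ContinuousOn g (Set.Icc 0 1))
    (hh : MonotoneOn h (Set.Icc 0 1)) {ε : ℝ} (hε : 0 < ε) :
    ∃ n : ℕ, 0 < n ∧ ∑ i ∈ range n, (g (i / n) - g ((i + 1) / n)) * (h ((i + 1) / n) - h (i / n))
      ≤ ε * (h 1 - h 0) := by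
  obtain ⟨δ, hδ, hgδ⟩ :=
    Metric.uniformContinuousOn_iff.1 (isCompact_Icc.uniformContinuousOn_of_continuous hg) ε hε
  obtain ⟨n, hn⟩ := exists_nat_gt (1 / δ)
  have hn₀ : (0 : ℝ) < n := (one_div_pos.2 hδ).trans hn
  refine ⟨n, by exact_mod_cast hn₀, ?_⟩
  have hmem : ∀ i ≤ n, (i / n : ℝ) ∈ Set.Icc 0 1 := fun i hi =>
    ⟨by positivity, div_le_one_of_le₀ (by exact_mod_cast hi) hn₀.le⟩
  calc ∑ i ∈ range n, (g (i / n) - g ((i + 1) / n)) * (h ((i + 1) / n) - h (i / n))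
      ≤ ∑ i ∈ range n, ε * (h ((i + 1) / n) - h (i / n)) := by
        refine sum_le_sum fun i hi => ?_
        have hi₀ := hmem i (mem_range.1 hi).le
        have hi₁ := hmem (i + 1) (mem_range.1 hi)
        push_cast at hi₁
        have hstep : (i / n : ℝ) ≤ (i + 1) / n := by gcongr; linarith
        have hdist : dist (i / n : ℝ) ((i + 1) / n) < δ := by
          rw [Real.dist_eq, ← sub_div, abs_div, abs_of_pos hn₀, sub_add_cancel_left, abs_neg,
            abs_one]
          exact (one_div_lt hδ hn₀).1 hn
        exact mul_le_mul_of_nonneg_right ((le_abs_self _).trans (hgδ _ hi₀ _ hi₁ hdist).le)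
          (sub_nonneg.2 (hh hi₀ hi₁ hstep))
    _ = ε * (h 1 - h 0) := by
        have htel := sum_range_sub (fun i : ℕ => h (i / n)) n
        push_cast at htel
        rw [← mul_sum, htel, div_self hn₀.ne', zero_div]

/- Lower and upper Riemann–Stieltjes sums of `∫₀¹ F ((1 - u) t) dG (u t)` on the grid `i / n`. -/
noncomputable def lowerGridSum (F G : ℝ → ℝ) (n : ℕ) (t : ℝ) : ℝ :=
  ∑ i ∈ range n, F ((1 - (i + 1) / n) * t) * (G ((i + 1) / n * t) - G (i / n * t))

noncomputable def upperGridSum (F G : ℝ → ℝ) (n : ℕ) (t : ℝ) : ℝ :=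
  ∑ i ∈ range n, F ((1 - i / n) * t) * (G ((i + 1) / n * t) - G (i / n * t))

lemma grid_coeffs_nonneg {n i : ℕ} (hi : i ∈ range n) :
    0 ≤ (i / n : ℝ) ∧ 0 ≤ ((i + 1) / n : ℝ) ∧ 0 ≤ 1 - (i / n : ℝ) ∧ 0 ≤ 1 - ((i + 1) / n : ℝ) := by
  have hin : (i : ℝ) + 1 ≤ n := by exact_mod_cast mem_range.1 hi
  have hn : (0 : ℝ) < n := by linarith [(i.cast_nonneg : (0 : ℝ) ≤ i)]
  refine ⟨by positivity, by positivity, ?_, ?_⟩ <;>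
  · rw [sub_nonneg, div_le_one hn]
    linarith

namespace RegVarying

variable {F G : ℝ → ℝ} {α β : ℝ}

lemma tendsto_lowerGridSum_div (hF : RegVarying F α) (hG : RegVarying G β) (hα : α ≠ 0)
    (hβ : β ≠ 0) (hFtop : Tendsto F atTop atTop) (hGtop : Tendsto G atTop atTop) (n : ℕ) :
    Tendsto (fun t => lowerGridSum F G n t / (F t * G t)) atTop
      (𝓝 (lowerGridSum (· ^ α) (· ^ β) n 1)) := by
  simpa only [lowerGridSum, mul_one] using hF.tendsto_sum_div_mul hG hα hβ hFtop hGtop (range n)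
    (fun i hi => (grid_coeffs_nonneg hi).2.2.2) (fun i hi => (grid_coeffs_nonneg hi).2.1)
    (fun i hi => (grid_coeffs_nonneg hi).1)

lemma tendsto_upperGridSum_div (hF : RegVarying F α) (hG : RegVarying G β) (hα : α ≠ 0)
    (hβ : β ≠ 0) (hFtop : Tendsto F atTop atTop) (hGtop : Tendsto G atTop atTop) (n : ℕ) :
    Tendsto (fun t => upperGridSum F G n t / (F t * G t)) atTop
      (𝓝 (upperGridSum (· ^ α) (· ^ β) n 1)) := by
  simpa only [upperGridSum, mul_one] using hF.tendsto_sum_div_mul hG hα hβ hFtop hGtop (range n)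
    (fun i hi => (grid_coeffs_nonneg hi).2.2.1) (fun i hi => (grid_coeffs_nonneg hi).2.1)
    (fun i hi => (grid_coeffs_nonneg hi).1)

end RegVarying

lemma lowerGridSum_rpow_two_pos {α β : ℝ} (hα : α ≠ 0) (hβ : β ≠ 0) :
    0 < lowerGridSum (· ^ α) (· ^ β) 2 1 := by
  norm_num [lowerGridSum, sum_range_succ, Real.zero_rpow hα, Real.zero_rpow hβ]
  positivity

lemma exists_upperGridSum_rpow_le {α β : ℝ} (hα : 0 < α) (hβ : 0 < β) {ε : ℝ} (hε : 0 < ε) :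
    ∃ n : ℕ, 0 < n ∧
      upperGridSum (· ^ α) (· ^ β) n 1 ≤ lowerGridSum (· ^ α) (· ^ β) n 1 + ε := by
  have hg : ContinuousOn (fun u : ℝ => (1 - u) ^ α) (Set.Icc 0 1) := fun u _ =>
    ((continuous_const.sub continuous_id).continuousAt.rpow_const (Or.inr hα.le)).continuousWithinAt
  have hh : MonotoneOn (fun u : ℝ => u ^ β) (Set.Icc 0 1) := fun u hu v _ huv =>
    Real.rpow_le_rpow hu.1 huv hβ.le
  obtain ⟨n, hn, hgap⟩ := exists_sum_sub_mul_sub_le hg hh hε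
  refine ⟨n, hn, ?_⟩
  rw [Real.one_rpow, Real.zero_rpow hβ.ne', sub_zero, mul_one] at hgap
  simp only [upperGridSum, lowerGridSum, mul_one]
  rw [← sub_le_iff_le_add', ← sum_sub_distrib]
  simpa only [← sub_mul] using hgap

noncomputable def distribFun (μ : Measure ℝ) (t : ℝ) : ℝ := (μ (Iic t)).toReal

section MeasureConvolution

variable {μ ν : Measure ℝ}

lemma sigmaFinite_of_measure_Iic_lt_top (hμ : ∀ t, μ (Iic t) < ⊤) : SigmaFinite μ :=
  ⟨⟨⟨fun n : ℕ => Iic (n : ℝ), fun _ => trivial, fun n => hμ n,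
    eq_univ_of_forall fun x => mem_iUnion.2 ⟨⌈x⌉₊, Nat.le_ceil x⟩⟩⟩⟩

lemma ae_nonneg_prod [SFinite ν] (hμ0 : μ (Iio 0) = 0) (hν0 : ν (Iio 0) = 0) :
    ∀ᵐ p ∂μ.prod ν, 0 ≤ p.1 ∧ 0 ≤ p.2 := by
  have hnonneg : ∀ {ρ : Measure ℝ}, ρ (Iio 0) = 0 → ∀ᵐ x ∂ρ, 0 ≤ x := fun h =>
    ae_iff.2 (by simp only [not_le]; exact h)
  exact (Measure.quasiMeasurePreserving_fst.ae (hnonneg hμ0)).and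
    (Measure.quasiMeasurePreserving_snd.ae (hnonneg hν0))

lemma mconv_apply {s : Set ℝ} (hs : MeasurableSet s) :
    mconv μ ν s = μ.prod ν {p | p.1 + p.2 ∈ s} :=
  Measure.map_apply (measurable_fst.add measurable_snd) hs

variable [SFinite ν] (hμ0 : μ (Iio 0) = 0) (hν0 : ν (Iio 0) = 0)
include hμ0 hν0

lemma mconv_Iio_zero : mconv μ ν (Iio 0) = 0 := by
  rw [mconv_apply measurableSet_Iio, measure_eq_zero_iff_ae_notMem]
  filter_upwards [ae_nonneg_prod hμ0 hν0] with p hp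
  simpa using add_nonneg hp.1 hp.2

lemma mconv_Iic_le (t : ℝ) : mconv μ ν (Iic t) ≤ μ (Iic t) * ν (Iic t) := by
  rw [mconv_apply measurableSet_Iic, ← Measure.prod_prod]
  refine measure_mono_ae ?_
  filter_upwards [ae_nonneg_prod hμ0 hν0] with p hp (hpt : p.1 + p.2 ≤ t)
  exact ⟨show p.1 ≤ t by linarith, show p.2 ≤ t by linarith⟩

omit hμ0 hν0 in
lemma sum_le_mconv_Iic {y : ℕ → ℝ} (hy : Monotone y) (t : ℝ) (n : ℕ) :
    ∑ i ∈ range n, μ (Iic (t - y (i + 1))) * ν (Ioc (y i) (y (i + 1)))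
      ≤ mconv μ ν (Iic t) := by
  have hdisj : (Finset.range n : Set ℕ).PairwiseDisjoint
      fun i => Iic (t - y (i + 1)) ×ˢ Ioc (y i) (y (i + 1)) := fun i _ j _ hij =>
    disjoint_prod.2 (Or.inr (hy.pairwise_disjoint_on_Ioc_succ hij))
  simp_rw [← Measure.prod_prod]
  rw [← measure_biUnion_finset hdisj fun _ _ => measurableSet_Iic.prod measurableSet_Ioc,
    mconv_apply measurableSet_Iic]
  refine measure_mono ?_
  simp only [iUnion_subset_iff]
  rintro i - ⟨x, y'⟩ ⟨hx, hy'⟩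
  simp only [Set.mem_Iic, Set.mem_Ioc] at hx hy'
  show x + y' ≤ t
  linarith [hy'.2]

lemma mconv_Iic_le_sum {y : ℕ → ℝ} {t : ℝ} {n : ℕ} (ht : t ≤ y n) :
    mconv μ ν (Iic t) ≤ μ (Iic t) * ν (Iic (y 0)) +
      ∑ i ∈ range n, μ (Iic (t - y i)) * ν (Ioc (y i) (y (i + 1))) := by
  rw [mconv_apply measurableSet_Iic]
  refine (measure_mono_ae (t := Iic t ×ˢ Iic (y 0) ∪
    ⋃ i ∈ range n, Iic (t - y i) ×ˢ Ioc (y i) (y (i + 1))) ?_).trans ?_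
  swap
  · simp_rw [← Measure.prod_prod]
    exact (measure_union_le _ _).trans (by gcongr; exact measure_biUnion_finset_le _ _)
  filter_upwards [ae_nonneg_prod hμ0 hν0] with p hp (hpt : p.1 + p.2 ≤ t)
  rcases le_or_gt p.2 (y 0) with hp0 | hp0
  · exact Or.inl ⟨show p.1 ≤ t by linarith, hp0⟩
  · obtain ⟨i, hi, hpi⟩ := mem_iUnion₂.1 (Ioc_subset_biUnion_Ioc n y ⟨hp0, by linarith⟩)
    exact Or.inr (mem_iUnion₂.2 ⟨i, hi, show p.1 ≤ t - y i by linarith [hpi.1], hpi⟩)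

end MeasureConvolution

section DistribFun

variable {μ : Measure ℝ}

lemma distribFun_nonneg : 0 ≤ distribFun μ := fun _ => ENNReal.toReal_nonneg

lemma distribFun_mono (hμ : ∀ t, μ (Iic t) < ⊤) : Monotone (distribFun μ) := fun _ b hab =>
  ENNReal.toReal_mono (hμ b).ne (measure_mono (Iic_subset_Iic.2 hab))

lemma toReal_measure_Ioc (hμ : ∀ t, μ (Iic t) < ⊤) {a b : ℝ} (hab : a ≤ b) :
    (μ (Ioc a b)).toReal = distribFun μ b - distribFun μ a := by
  rw [distribFun, ← Iic_union_Ioc_eq_Iic hab, measure_union (Iic_disjoint_Ioc le_rfl)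
    measurableSet_Ioc, ENNReal.toReal_add (hμ a).ne
    ((measure_mono Set.Ioc_subset_Iic_self).trans_lt (hμ b)).ne, distribFun]
  ring

end DistribFun

section GridBounds

lemma monotone_natCast_div_mul {t : ℝ} (ht : 0 ≤ t) (n : ℕ) :
    Monotone fun i : ℕ => (i / n : ℝ) * t :=
  fun _ _ hij => mul_le_mul_of_nonneg_right
    (div_le_div_of_nonneg_right (by exact_mod_cast hij) n.cast_nonneg) ht

variable {μ ν : Measure ℝ} (hμ0 : μ (Iio 0) = 0) (hν0 : ν (Iio 0) = 0)
  (hμ : ∀ t, μ (Iic t) < ⊤) (hν : ∀ t, ν (Iic t) < ⊤)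

include hμ hν in
lemma measure_Iic_mul_measure_Ioc_ne_top (a b c : ℝ) : μ (Iic a) * ν (Ioc b c) ≠ ⊤ :=
  ENNReal.mul_ne_top (hμ a).ne ((measure_mono Set.Ioc_subset_Iic_self).trans_lt (hν c)).ne

include hν in
lemma toReal_measure_mul_measure_grid {t : ℝ} (ht : 0 ≤ t) (n i : ℕ) (a : ℝ) :
    (μ (Iic (t - a * t)) * ν (Ioc (i / n * t) ((i + 1 : ℕ) / n * t))).toReal =
      distribFun μ ((1 - a) * t) * (distribFun ν ((i + 1) / n * t) - distribFun ν (i / n * t)) := by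
  rw [ENNReal.toReal_mul, toReal_measure_Ioc hν (monotone_natCast_div_mul ht n i.le_succ),
    one_sub_mul]
  push_cast
  rfl

include hμ0 hν0 hμ hν

lemma lowerGridSum_le_distribFun_mconv {t : ℝ} (ht : 0 ≤ t) (n : ℕ) :
    lowerGridSum (distribFun μ) (distribFun ν) n t ≤ distribFun (mconv μ ν) t := by
  have := sigmaFinite_of_measure_Iic_lt_top hν
  have hfin : mconv μ ν (Iic t) ≠ ⊤ :=
    ((mconv_Iic_le hμ0 hν0 t).trans_lt (ENNReal.mul_lt_top (hμ t) (hν t))).ne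
  have h := ENNReal.toReal_mono hfin (sum_le_mconv_Iic (monotone_natCast_div_mul ht n) t n)
  rw [ENNReal.toReal_sum fun i _ => measure_Iic_mul_measure_Ioc_ne_top hμ hν _ _ _] at h
  refine le_of_eq_of_le (sum_congr rfl fun i _ => ?_) h
  rw [toReal_measure_mul_measure_grid hν ht]
  push_cast
  rfl

lemma distribFun_mconv_le_upperGridSum {t : ℝ} (ht : 0 ≤ t) {n : ℕ} (hn : 0 < n) :
    distribFun (mconv μ ν) t ≤
      distribFun μ t * distribFun ν 0 + upperGridSum (distribFun μ) (distribFun ν) n t := by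
  have := sigmaFinite_of_measure_Iic_lt_top hν
  have hend : t ≤ (n / n : ℝ) * t := by rw [div_self (by positivity), one_mul]
  have h := mconv_Iic_le_sum (y := fun i : ℕ => (i / n : ℝ) * t) hμ0 hν0 hend
  simp only [CharP.cast_eq_zero, zero_div, zero_mul] at h
  have hsum : ∑ i ∈ range n, μ (Iic (t - i / n * t)) * ν (Ioc (i / n * t) ((i + 1 : ℕ) / n * t))
      ≠ ⊤ := ENNReal.sum_ne_top.2 fun i _ => measure_Iic_mul_measure_Ioc_ne_top hμ hν _ _ _
  have hfirst : μ (Iic t) * ν (Iic 0) ≠ ⊤ := ENNReal.mul_ne_top (hμ t).ne (hν 0).ne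
  refine (ENNReal.toReal_mono (ENNReal.add_ne_top.2 ⟨hfirst, hsum⟩) h).trans_eq ?_
  rw [ENNReal.toReal_add hfirst hsum, ENNReal.toReal_mul,
    ENNReal.toReal_sum fun i _ => measure_Iic_mul_measure_Ioc_ne_top hμ hν _ _ _]
  exact congrArg _ (sum_congr rfl fun i _ => toReal_measure_mul_measure_grid hν ht n i _)

end GridBounds

section Convolution

variable {μ ν : Measure ℝ} {α β : ℝ} (hα : 0 < α) (hβ : 0 < β)
  (hμ0 : μ (Iio 0) = 0) (hν0 : ν (Iio 0) = 0) (hμ : ∀ t, μ (Iic t) < ⊤) (hν : ∀ t, ν (Iic t) < ⊤)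
include hα hβ hμ0 hν0 hμ hν

lemma exists_tendsto_distribFun_mconv_div (hF : RegVarying (distribFun μ) α)
    (hG : RegVarying (distribFun ν) β) :
    ∃ c, 0 < c ∧ Tendsto (fun t => distribFun (mconv μ ν) t / (distribFun μ t * distribFun ν t))
      atTop (𝓝 c) := by
  -- `c = ∫₀¹ (1 - u) ^ α d(u ^ β)`, squeezed between the grid sums of the limit profiles.
  have hFtop := hF.tendsto_atTop hα (distribFun_mono hμ) distribFun_nonneg
  have hGtop := hG.tendsto_atTop hβ (distribFun_mono hν) distribFun_nonneg
  have hpos : ∀ᶠ t in atTop, 0 ≤ t ∧ 0 < distribFun μ t ∧ 0 < distribFun ν t :=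
    (eventually_ge_atTop 0).and ((hFtop.eventually_gt_atTop 0).and (hGtop.eventually_gt_atTop 0))
  obtain ⟨c, hcL, hc⟩ := exists_tendsto_of_squeeze (ι := {n : ℕ // 0 < n})
    (lo := fun n t => lowerGridSum (distribFun μ) (distribFun ν) n t /
      (distribFun μ t * distribFun ν t))
    (up := fun n t => distribFun ν 0 / distribFun ν t +
      upperGridSum (distribFun μ) (distribFun ν) n t / (distribFun μ t * distribFun ν t))
    (cL := fun n => lowerGridSum (· ^ α) (· ^ β) n 1)
    (cU := fun n => upperGridSum (· ^ α) (· ^ β) n 1)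
    (fun n => hF.tendsto_lowerGridSum_div hG hα.ne' hβ.ne' hFtop hGtop n)
    (fun n => by
      simpa using (tendsto_const_nhds.div_atTop hGtop).add
        (hF.tendsto_upperGridSum_div hG hα.ne' hβ.ne' hFtop hGtop n))
    (fun n => hpos.mono fun t ht => div_le_div_of_nonneg_right
      (lowerGridSum_le_distribFun_mconv hμ0 hν0 hμ hν ht.1 n) (mul_pos ht.2.1 ht.2.2).le)
    (fun n => hpos.mono fun t ht => by
      dsimp only
      rw [← mul_div_mul_left (distribFun ν 0) _ ht.2.1.ne', ← add_div]
      exact div_le_div_of_nonneg_right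
        (distribFun_mconv_le_upperGridSum hμ0 hν0 hμ hν ht.1 n.2) (mul_pos ht.2.1 ht.2.2).le)
    (fun ε hε => let ⟨n, hn, h⟩ := exists_upperGridSum_rpow_le hα hβ hε; ⟨⟨n, hn⟩, h⟩)
  exact ⟨c, (lowerGridSum_rpow_two_pos hα.ne' hβ.ne').trans_le (hcL ⟨2, two_pos⟩), hc⟩

theorem RegVarying.distribFun_mconv (hF : RegVarying (distribFun μ) α)
    (hG : RegVarying (distribFun ν) β) : RegVarying (distribFun (mconv μ ν)) (α + β) := by
  obtain ⟨c, hc, hlim⟩ := exists_tendsto_distribFun_mconv_div hα hβ hμ0 hν0 hμ hν hF hG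
  exact (hF.mul hG).of_tendsto_div hc.ne' hlim

end Convolution

/-- if `f` is nondecreasing, right-continuous, vanishes at `0⁻`
(equivalently `f t = μ (Iic t)` for a locally finite measure `μ` on `[0,∞)`) and is
regularly varying at `∞` of index `α > 0`, then for every `j ≥ 1` the `j`-fold
Lebesgue–Stieltjes convolution `f^{*(j)}` is regularly varying at `∞` of index `α j`. -/
theorem stmt1 (α : ℝ) (hα : 0 < α) (f : ℝ → ℝ) (μ : MeasureTheory.Measure ℝ)
    (hsupp : μ (Set.Iio 0) = 0) (hfin : ∀ t : ℝ, μ (Set.Iic t) < ⊤)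
    (hrep : ∀ t : ℝ, f t = (μ (Set.Iic t)).toReal)
    (hreg : ∀ lam : ℝ, 0 < lam →
      Tendsto (fun t : ℝ => f (lam * t) / f t) atTop (𝓝 (lam ^ α)))
    (j : ℕ) (hj : 1 ≤ j) :
    ∀ lam : ℝ, 0 < lam →
      Tendsto (fun t : ℝ => convFun μ j (lam * t) / convFun μ j t) atTop
        (𝓝 (lam ^ (α * j))) := by
  obtain rfl : f = distribFun μ := funext hrep
  suffices h : mconvPow μ j (Iio 0) = 0 ∧ (∀ t, mconvPow μ j (Iic t) < ⊤) ∧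
      RegVarying (distribFun (mconvPow μ j)) (α * j) from h.2.2
  induction j, hj using Nat.le_induction with
  | base => simpa using ⟨hsupp, hfin, hreg⟩
  | succ k hk ih =>
    obtain ⟨hk0, hkfin, hkreg⟩ := ih
    obtain ⟨m, rfl⟩ := Nat.exists_eq_add_of_le' hk
    have := sigmaFinite_of_measure_Iic_lt_top hkfin
    rw [show mconvPow μ (m + 1 + 1) = mconv μ (mconvPow μ (m + 1)) from rfl]
    refine ⟨mconv_Iio_zero hsupp hk0, fun t => (mconv_Iic_le hsupp hk0 t).trans_lt
      (ENNReal.mul_lt_top (hfin t) (hkfin t)), ?_⟩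
    have hαk : 0 < α * (m + 1 : ℕ) := mul_pos hα (by positivity)
    simpa only [Nat.cast_succ, mul_add_one, add_comm α] using
      RegVarying.distribFun_mconv hα hαk hsupp hk0 hfin hkfin hreg hkreg
end

section
/- Let f and g be nondecreasing right-continuous functions on [0,∞) with f regularly varying at ∞ of index α > 0 and g regularly varying at ∞ of index β > 0, and let h(t) = ∫_{[0,t]} f(t−y) dg(y). Then lim_{t→∞} h(t)/(f(t) g(t)) = Γ(1+α)Γ(1+β)/Γ(1+α+β). -/
/-!
Cut `[0, t]` into `n` equal pieces. As `y ↦ f (t - y)` is nonincreasing, on each piece it lies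
between its values at the two endpoints, so `h t / (f t * g t)` is squeezed between
Riemann–Stieltjes sums of `s ↦ f (t - s t) / f t` against `s ↦ g (s t) / g t`, up to a term
`g 0 / g t` for a possible atom of `dg` at `0`. For monotone functions regular variation of
positive index extends to the scale `λ = 0`, so as `t → ∞` these sums tend to the corresponding
sums of `(1 - s) ^ α` against `s ^ β`, while `g 0 / g t → 0`. As `n → ∞` both of those sums
converge to `∫₀¹ (1 - s) ^ α d(s ^ β) = β B(β, 1 + α) = Γ(1 + α) Γ(1 + β) / Γ(1 + α + β)`.
-/

open MeasureTheory Set Filter Topology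

def RegularlyVarying (f : ℝ → ℝ) (α : ℝ) : Prop :=
  ∀ lam : ℝ, 0 < lam → Tendsto (fun t : ℝ => f (lam * t) / f t) atTop (𝓝 (lam ^ α))

namespace RegularlyVarying

variable {f : ℝ → ℝ} {α : ℝ}

theorem eventually_pos (hf : RegularlyVarying f α) (hnn : ∀ t, 0 ≤ f t) :
    ∀ᶠ t in atTop, 0 < f t := by
  filter_upwards [(hf 2 two_pos).eventually (lt_mem_nhds (Real.rpow_pos_of_pos two_pos α))]
    with t ht
  exact (hnn t).lt_of_ne fun h => by simp [← h] at ht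

theorem tendsto_apply_zero_div (hf : RegularlyVarying f α) (hα : 0 < α) (hmono : Monotone f)
    (hnn : ∀ t, 0 ≤ f t) : Tendsto (fun t => f 0 / f t) atTop (𝓝 0) := by
  refine tendsto_order.2 ⟨fun a ha => .of_forall fun t => ha.trans_le (div_nonneg (hnn 0) (hnn t)),
    fun b hb => ?_⟩
  have hpow : Tendsto (fun x : ℝ => x ^ α) (𝓝[>] 0) (𝓝 0) := by
    simpa [Real.zero_rpow hα.ne'] using
      (Real.continuousAt_rpow_const 0 α (Or.inr hα.le)).tendsto.mono_left nhdsWithin_le_nhds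
  obtain ⟨δ, hδb, hδ⟩ := ((hpow.eventually (gt_mem_nhds hb)).and self_mem_nhdsWithin).exists
  filter_upwards [(hf δ hδ).eventually (gt_mem_nhds hδb), eventually_ge_atTop 0] with t ht ht0
  exact (div_le_div_of_nonneg_right (hmono (mul_nonneg (le_of_lt hδ) ht0)) (hnn t)).trans_lt ht

theorem tendsto_of_nonneg (hf : RegularlyVarying f α) (hα : 0 < α) (hmono : Monotone f)
    (hnn : ∀ t, 0 ≤ f t) {lam : ℝ} (hlam : 0 ≤ lam) :
    Tendsto (fun t => f (lam * t) / f t) atTop (𝓝 (lam ^ α)) := by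
  rcases hlam.eq_or_lt with rfl | hlam
  · simpa [Real.zero_rpow hα.ne'] using hf.tendsto_apply_zero_div hα hmono hnn
  · exact hf lam hlam

end RegularlyVarying

theorem integral_rpow_mul_one_sub_rpow {a b : ℝ} (ha : 0 < a) (hb : 0 < b) :
    ∫ s in (0 : ℝ)..1, s ^ (a - 1) * (1 - s) ^ (b - 1) =
      Real.Gamma a * Real.Gamma b / Real.Gamma (a + b) := by
  have h := Complex.Gamma_mul_Gamma_eq_betaIntegral (s := a) (t := b) (by simpa) (by simpa)
  have hB : Complex.betaIntegral a b =
      ((∫ s in (0 : ℝ)..1, s ^ (a - 1) * (1 - s) ^ (b - 1) : ℝ) : ℂ) := by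
    rw [Complex.betaIntegral, ← intervalIntegral.integral_ofReal]
    refine intervalIntegral.integral_congr fun s hs => ?_
    rw [uIcc_of_le zero_le_one] at hs
    simp [Complex.ofReal_cpow hs.1, Complex.ofReal_cpow (sub_nonneg.2 hs.2)]
  rw [hB, ← Complex.ofReal_add, Complex.Gamma_ofReal, Complex.Gamma_ofReal,
    Complex.Gamma_ofReal] at h
  rw [eq_div_iff (Real.Gamma_pos_of_pos (add_pos ha hb)).ne', mul_comm]
  exact_mod_cast h.symm

theorem integral_one_sub_rpow_mul_deriv_rpow {α β : ℝ} (hα : -1 < α) (hβ : 0 < β) :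
    ∫ s in (0 : ℝ)..1, (1 - s) ^ α * (β * s ^ (β - 1)) =
      Real.Gamma (1 + α) * Real.Gamma (1 + β) / Real.Gamma (1 + α + β) := by
  have h := integral_rpow_mul_one_sub_rpow hβ (show 0 < α + 1 by linarith)
  simp only [add_sub_cancel_right] at h
  calc ∫ s in (0 : ℝ)..1, (1 - s) ^ α * (β * s ^ (β - 1))
      = β * ∫ s in (0 : ℝ)..1, s ^ (β - 1) * (1 - s) ^ α := by
        rw [← intervalIntegral.integral_const_mul]
        congr 1 with s
        ring
    _ = _ := by
        rw [h, add_comm 1 β, Real.Gamma_add_one hβ.ne', add_comm 1 α,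
          show α + 1 + β = β + (α + 1) by ring]
        ring

noncomputable def stieltjesSum (φ G : ℝ → ℝ) (n : ℕ) (τ : ℕ → ℝ) : ℝ :=
  ∑ i ∈ Finset.range n, φ (τ i) * (G ((i + 1) / n) - G (i / n))

theorem natCast_div_mem_Icc {i n : ℕ} (h : i ≤ n) : (i : ℝ) / n ∈ Icc (0 : ℝ) 1 :=
  ⟨by positivity, div_le_one_of_le₀ (by exact_mod_cast h) (by positivity)⟩

theorem natCast_add_one_div_mem_Icc {i n : ℕ} (h : i < n) :
    ((i : ℝ) + 1) / n ∈ Icc (0 : ℝ) 1 := by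
  exact_mod_cast natCast_div_mem_Icc h

theorem tendsto_stieltjesSum {ι : Type*} {l : Filter ι} {φ G : ι → ℝ → ℝ} {φ₀ G₀ : ℝ → ℝ}
    (hφ : ∀ s ∈ Icc (0 : ℝ) 1, Tendsto (fun t => φ t s) l (𝓝 (φ₀ s)))
    (hG : ∀ s ∈ Icc (0 : ℝ) 1, Tendsto (fun t => G t s) l (𝓝 (G₀ s)))
    (n : ℕ) {τ : ℕ → ℝ} (hτ : ∀ i < n, τ i ∈ Icc (0 : ℝ) 1) :
    Tendsto (fun t => stieltjesSum (φ t) (G t) n τ) l (𝓝 (stieltjesSum φ₀ G₀ n τ)) := by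
  refine tendsto_finsetSum _ fun i hi => ?_
  have hi := Finset.mem_range.1 hi
  exact (hφ _ (hτ i hi)).mul
    ((hG _ (natCast_add_one_div_mem_Icc hi)).sub (hG _ (natCast_div_mem_Icc hi.le)))

section Darboux

variable {φ ψ G : ℝ → ℝ}

theorem integral_mul_mem_Icc_of_antitoneOn {a b : ℝ} (hab : a ≤ b)
    (hφ : AntitoneOn φ (Icc a b)) (hφc : ContinuousOn φ (Icc a b))
    (hψ : ∀ s ∈ Icc a b, 0 ≤ ψ s) (hψi : IntervalIntegrable ψ volume a b) :
    ∫ s in a..b, φ s * ψ s ∈ Icc (φ b * ∫ s in a..b, ψ s) (φ a * ∫ s in a..b, ψ s) := by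
  have hφψ : IntervalIntegrable (fun s => φ s * ψ s) volume a b :=
    hψi.continuousOn_mul (by rwa [uIcc_of_le hab])
  rw [← intervalIntegral.integral_const_mul, ← intervalIntegral.integral_const_mul]
  constructor
  · refine intervalIntegral.integral_mono_on hab (hψi.const_mul _) hφψ fun s hs => ?_
    exact mul_le_mul_of_nonneg_right (hφ hs (right_mem_Icc.2 hab) hs.2) (hψ s hs)
  · refine intervalIntegral.integral_mono_on hab hφψ (hψi.const_mul _) fun s hs => ?_
    exact mul_le_mul_of_nonneg_right (hφ (left_mem_Icc.2 hab) hs hs.1) (hψ s hs)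

theorem integral_mul_mem_Icc_stieltjesSum (hφ : AntitoneOn φ (Icc 0 1))
    (hφc : ContinuousOn φ (Icc 0 1)) (hψ : ∀ s ∈ Icc (0 : ℝ) 1, 0 ≤ ψ s)
    (hψi : IntervalIntegrable ψ volume 0 1)
    (hG : ∀ a ∈ Icc (0 : ℝ) 1, ∀ b ∈ Icc (0 : ℝ) 1, ∫ s in a..b, ψ s = G b - G a)
    {n : ℕ} (hn : n ≠ 0) :
    ∫ s in (0 : ℝ)..1, φ s * ψ s ∈
      Icc (stieltjesSum φ G n (fun i => ((i : ℝ) + 1) / n))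
        (stieltjesSum φ G n (fun i => (i : ℝ) / n)) := by
  set c : ℕ → ℝ := fun i => (i : ℝ) / n
  have hcle : ∀ i, c i ≤ c (i + 1) := fun i => by simp only [c]; gcongr; simp
  have hc : ∀ i < n, Icc (c i) (c (i + 1)) ⊆ Icc 0 1 := fun i hi =>
    Icc_subset_Icc (natCast_div_mem_Icc hi.le).1 (natCast_div_mem_Icc hi).2
  have hc' : ∀ i < n, uIcc (c i) (c (i + 1)) ⊆ uIcc 0 1 := fun i hi => by
    simpa only [uIcc_of_le (hcle i), uIcc_of_le zero_le_one] using hc i hi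
  have hφψ : IntervalIntegrable (fun s => φ s * ψ s) volume 0 1 :=
    hψi.continuousOn_mul (by rwa [uIcc_of_le zero_le_one])
  have hΔ : ∀ i < n, ∫ s in c i..c (i + 1), ψ s = G ((i + 1) / n) - G (i / n) := fun i hi => by
    rw [hG _ (natCast_div_mem_Icc hi.le) _ (natCast_div_mem_Icc hi)]
    simp
  have hpiece : ∀ i < n, _ := fun i hi => hΔ i hi ▸
    integral_mul_mem_Icc_of_antitoneOn (hcle i) (hφ.mono (hc i hi)) (hφc.mono (hc i hi))
      (fun s hs => hψ s (hc i hi hs)) (hψi.mono_set (hc' i hi))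
  have hsum : ∫ s in (0 : ℝ)..1, φ s * ψ s =
      ∑ i ∈ Finset.range n, ∫ s in c i..c (i + 1), φ s * ψ s := by
    rw [intervalIntegral.sum_integral_adjacent_intervals fun i hi => hφψ.mono_set (hc' i hi)]
    simp [c, hn]
  rw [hsum]
  exact ⟨Finset.sum_le_sum fun i hi => by simpa [c] using (hpiece i (Finset.mem_range.1 hi)).1,
    Finset.sum_le_sum fun i hi => (hpiece i (Finset.mem_range.1 hi)).2⟩

theorem abs_stieltjesSum_sub_le (hG : MonotoneOn G (Icc 0 1)) {n : ℕ} (hn : n ≠ 0) {ε : ℝ}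
    (hφ : ∀ i < n, |φ (i / n) - φ ((i + 1) / n)| ≤ ε) :
    |stieltjesSum φ G n (fun i => (i : ℝ) / n) -
        stieltjesSum φ G n (fun i => ((i : ℝ) + 1) / n)| ≤ ε * (G 1 - G 0) := by
  have hΔ : ∀ i < n, 0 ≤ G ((i + 1) / n) - G (i / n) := fun i hi =>
    sub_nonneg.2 (hG (natCast_div_mem_Icc hi.le) (natCast_add_one_div_mem_Icc hi)
      (by gcongr; linarith))
  have htel : ∑ i ∈ Finset.range n, (G ((i + 1) / n) - G (i / n)) = G 1 - G 0 := by
    have := Finset.sum_range_sub (fun i : ℕ => G (i / n)) n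
    push_cast at this
    simp [this, hn]
  unfold stieltjesSum
  rw [← Finset.sum_sub_distrib, ← htel, Finset.mul_sum]
  refine (Finset.abs_sum_le_sum_abs _ _).trans (Finset.sum_le_sum fun i hi => ?_)
  have hi := Finset.mem_range.1 hi
  rw [← sub_mul, abs_mul, abs_of_nonneg (hΔ i hi)]
  exact mul_le_mul_of_nonneg_right (hφ i hi) (hΔ i hi)

theorem tendsto_stieltjesSum_sub (hφ : ContinuousOn φ (Icc 0 1)) (hG : MonotoneOn G (Icc 0 1)) :
    Tendsto (fun n : ℕ => stieltjesSum φ G n (fun i => (i : ℝ) / n) -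
      stieltjesSum φ G n (fun i => ((i : ℝ) + 1) / n)) atTop (𝓝 0) := by
  rw [Metric.tendsto_atTop]
  intro ε hε
  have hG01 : 0 ≤ G 1 - G 0 := sub_nonneg.2 (hG (left_mem_Icc.2 zero_le_one)
    (right_mem_Icc.2 zero_le_one) zero_le_one)
  obtain ⟨δ, hδ, hφδ⟩ := Metric.uniformContinuousOn_iff.1
    (isCompact_Icc.uniformContinuousOn_of_continuous hφ) (ε / (G 1 - G 0 + 1)) (by positivity)
  obtain ⟨N, hN⟩ := exists_nat_one_div_lt hδ
  refine ⟨N + 1, fun n hn => ?_⟩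
  have hmesh : ∀ i : ℕ, dist ((i : ℝ) / n) ((i + 1) / n) < δ := fun i => by
    rw [Real.dist_eq, abs_sub_comm, ← sub_div, add_sub_cancel_left, abs_of_nonneg (by positivity)]
    refine lt_of_le_of_lt ?_ hN
    gcongr
    exact_mod_cast hn
  rw [Real.dist_eq, sub_zero]
  refine (abs_stieltjesSum_sub_le hG (by omega) fun i hi => (hφδ _ (natCast_div_mem_Icc hi.le) _
    (natCast_add_one_div_mem_Icc hi) (hmesh i)).le).trans_lt ?_
  rw [div_mul_eq_mul_div, div_lt_iff₀ (by positivity)]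
  nlinarith

theorem tendsto_stieltjesSum_integral_mul (hφ : AntitoneOn φ (Icc 0 1))
    (hφc : ContinuousOn φ (Icc 0 1)) (hψ : ∀ s ∈ Icc (0 : ℝ) 1, 0 ≤ ψ s)
    (hψi : IntervalIntegrable ψ volume 0 1)
    (hG : ∀ a ∈ Icc (0 : ℝ) 1, ∀ b ∈ Icc (0 : ℝ) 1, ∫ s in a..b, ψ s = G b - G a) :
    Tendsto (fun n : ℕ => stieltjesSum φ G n (fun i => (i : ℝ) / n)) atTop
        (𝓝 (∫ s in (0 : ℝ)..1, φ s * ψ s)) ∧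
      Tendsto (fun n : ℕ => stieltjesSum φ G n (fun i => ((i : ℝ) + 1) / n)) atTop
        (𝓝 (∫ s in (0 : ℝ)..1, φ s * ψ s)) := by
  have hGm : MonotoneOn G (Icc 0 1) := fun a ha b hb hab => by
    rw [← sub_nonneg, ← hG a ha b hb]
    exact intervalIntegral.integral_nonneg hab fun s hs =>
      hψ s ⟨ha.1.trans hs.1, hs.2.trans hb.2⟩
  have hgap := tendsto_stieltjesSum_sub hφc hGm
  have hbounds := (eventually_ne_atTop 0).mono fun n hn =>
    integral_mul_mem_Icc_stieltjesSum (G := G) hφ hφc hψ hψi hG hn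
  constructor
  · refine tendsto_of_tendsto_of_tendsto_of_le_of_le' tendsto_const_nhds
      (by simpa using hgap.const_add (∫ s in (0 : ℝ)..1, φ s * ψ s))
      (hbounds.mono fun n hn => hn.2) (hbounds.mono fun n hn => by linarith [hn.1])
  · refine tendsto_of_tendsto_of_tendsto_of_le_of_le'
      (by simpa using hgap.const_sub (∫ s in (0 : ℝ)..1, φ s * ψ s)) tendsto_const_nhds
      (hbounds.mono fun n hn => by linarith [hn.2]) (hbounds.mono fun n hn => hn.1)

end Darboux

theorem tendsto_stieltjesSum_one_sub_rpow_rpow {α β : ℝ} (hα : 0 < α) (hβ : 0 < β) :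
    Tendsto (fun n : ℕ => stieltjesSum (fun s => (1 - s) ^ α) (fun s => s ^ β) n
        (fun i => (i : ℝ) / n)) atTop
        (𝓝 (Real.Gamma (1 + α) * Real.Gamma (1 + β) / Real.Gamma (1 + α + β))) ∧
      Tendsto (fun n : ℕ => stieltjesSum (fun s => (1 - s) ^ α) (fun s => s ^ β) n
        (fun i => ((i : ℝ) + 1) / n)) atTop
        (𝓝 (Real.Gamma (1 + α) * Real.Gamma (1 + β) / Real.Gamma (1 + α + β))) := by
  rw [← integral_one_sub_rpow_mul_deriv_rpow (by linarith) hβ]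
  refine tendsto_stieltjesSum_integral_mul
    (fun a _ b hb hab => Real.rpow_le_rpow (by linarith [hb.2]) (by linarith) hα.le)
    ((continuous_const.sub continuous_id).rpow_const fun _ => Or.inr hα.le).continuousOn
    (fun s hs => mul_nonneg hβ.le (Real.rpow_nonneg hs.1 _))
    ((intervalIntegral.intervalIntegrable_rpow' (by linarith)).const_mul β) fun a _ b _ => ?_
  rw [intervalIntegral.integral_const_mul, integral_rpow (Or.inl (by linarith)), sub_add_cancel]
  field_simp

section Antitone

variable {ν : Measure ℝ} [IsLocallyFiniteMeasure ν] {F : ℝ → ℝ}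

theorem integral_mem_Icc_of_antitone (hF : Antitone F) {a b : ℝ} (hab : a ≤ b) :
    ∫ y in a..b, F y ∂ν ∈ Icc (F b * ν.real (Ioc a b)) (F a * ν.real (Ioc a b)) := by
  have hint : IntegrableOn F (Ioc a b) ν := (hF.intervalIntegrable (μ := ν)).1
  have hfin : ν (Ioc a b) ≠ ⊤ := measure_Ioc_lt_top.ne
  rw [intervalIntegral.integral_of_le hab, mul_comm, mul_comm (F a), ← smul_eq_mul,
    ← smul_eq_mul, ← setIntegral_const, ← setIntegral_const]
  exact ⟨setIntegral_mono_on (integrableOn_const hfin) hint measurableSet_Ioc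
      fun y hy => hF hy.2,
    setIntegral_mono_on hint (integrableOn_const hfin) measurableSet_Ioc
      fun y hy => hF hy.1.le⟩

theorem integral_mem_Icc_sum_of_antitone (hF : Antitone F) {c : ℕ → ℝ} (hc : Monotone c)
    (n : ℕ) :
    ∫ y in c 0..c n, F y ∂ν ∈
      Icc (∑ i ∈ Finset.range n, F (c (i + 1)) * ν.real (Ioc (c i) (c (i + 1))))
        (∑ i ∈ Finset.range n, F (c i) * ν.real (Ioc (c i) (c (i + 1)))) := by
  rw [← intervalIntegral.sum_integral_adjacent_intervals fun _ _ => hF.intervalIntegrable]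
  exact ⟨Finset.sum_le_sum fun i _ => (integral_mem_Icc_of_antitone hF (hc i.le_succ)).1,
    Finset.sum_le_sum fun i _ => (integral_mem_Icc_of_antitone hF (hc i.le_succ)).2⟩

end Antitone

theorem monotone_measureReal_Iic {μ : Measure ℝ} (hμ : ∀ t, μ (Iic t) < ⊤) :
    Monotone fun t => μ.real (Iic t) :=
  fun _ _ hst => measureReal_mono (Iic_subset_Iic.2 hst) (hμ _).ne

theorem measureReal_Ioc_eq_sub {ν : Measure ℝ} (hν : ∀ x, ν (Iic x) < ⊤) {a b : ℝ}
    (hab : a ≤ b) : ν.real (Ioc a b) = ν.real (Iic b) - ν.real (Iic a) := by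
  rw [← Iic_union_Ioc_eq_Iic hab, measureReal_union (Iic_disjoint_Ioc le_rfl) measurableSet_Ioc
    (hν a).ne (ne_top_of_le_ne_top (hν b).ne (measure_mono Ioc_subset_Iic_self))]
  ring

section Convolution

variable {f g : ℝ → ℝ} {ν : Measure ℝ}

theorem setIntegral_Icc_sub_mem_Icc_sum (hf : Monotone f) (hfnn : ∀ x, 0 ≤ f x)
    (hν : ∀ x, ν (Iic x) < ⊤) (hg : ∀ x, g x = ν.real (Iic x))
    {t : ℝ} {c : ℕ → ℝ} {n : ℕ} (hc : Monotone c) (hc0 : c 0 = 0) (hcn : c n = t) :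
    ∫ y in Icc 0 t, f (t - y) ∂ν ∈
      Icc (∑ i ∈ Finset.range n, f (t - c (i + 1)) * (g (c (i + 1)) - g (c i)))
        (f t * g 0 + ∑ i ∈ Finset.range n, f (t - c i) * (g (c (i + 1)) - g (c i))) := by
  have : IsLocallyFiniteMeasure ν := ⟨fun x => ⟨Iic (x + 1), Iic_mem_nhds (lt_add_one x), hν _⟩⟩
  have hF : Antitone fun y => f (t - y) := hf.comp_antitone fun a b hab => by linarith
  have ht : 0 ≤ t := hcn ▸ hc0 ▸ hc (Nat.zero_le n)
  -- the interval integral over `(0, t]` misses the atom of `ν` at `0`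
  have hsplit : ∫ y in Icc 0 t, f (t - y) ∂ν =
      ν.real {0} * f t + ∫ y in (0 : ℝ)..t, f (t - y) ∂ν := by
    rw [← Icc_union_Ioc_eq_Icc le_rfl ht, Icc_self, setIntegral_union (by simp) measurableSet_Ioc
      ((hF.intervalIntegrable (μ := ν) (a := -1) (b := 0)).1.mono_set
        (singleton_subset_iff.2 ⟨by norm_num, le_rfl⟩))
      (hF.intervalIntegrable (μ := ν)).1, integral_singleton, sub_zero,
      intervalIntegral.integral_of_le ht, smul_eq_mul]
  have hatom : ν.real {0} ≤ g 0 :=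
    hg 0 ▸ measureReal_mono (singleton_subset_iff.2 (mem_Iic.2 le_rfl)) (hν 0).ne
  have hmass : ∀ i, ν.real (Ioc (c i) (c (i + 1))) = g (c (i + 1)) - g (c i) := fun i => by
    rw [measureReal_Ioc_eq_sub hν (hc i.le_succ), hg, hg]
  obtain ⟨hlo, hhi⟩ := integral_mem_Icc_sum_of_antitone (ν := ν) hF hc n
  simp only [hmass, hc0, hcn] at hlo hhi
  rw [hsplit]
  have := mul_le_mul_of_nonneg_right hatom (hfnn t)
  have := mul_nonneg (measureReal_nonneg (μ := ν) (s := {0})) (hfnn t)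
  exact ⟨by nlinarith, by nlinarith⟩

theorem setIntegral_Icc_sub_div_mem_Icc_stieltjesSum (hf : Monotone f) (hfnn : ∀ x, 0 ≤ f x)
    (hν : ∀ x, ν (Iic x) < ⊤) (hg : ∀ x, g x = ν.real (Iic x))
    {t : ℝ} (ht : 0 ≤ t) (hft : 0 < f t) (hgt : 0 < g t) {n : ℕ} (hn : n ≠ 0) :
    (∫ y in Icc 0 t, f (t - y) ∂ν) / (f t * g t) ∈
      Icc (stieltjesSum (fun s => f (t - s * t) / f t) (fun s => g (s * t) / g t) n
          (fun i => ((i : ℝ) + 1) / n))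
        (g 0 / g t + stieltjesSum (fun s => f (t - s * t) / f t) (fun s => g (s * t) / g t) n
          (fun i => (i : ℝ) / n)) := by
  have hc : Monotone fun i : ℕ => (i : ℝ) / n * t := fun i j hij =>
    mul_le_mul_of_nonneg_right (by gcongr) ht
  obtain ⟨hlo, hhi⟩ := setIntegral_Icc_sub_mem_Icc_sum (t := t) (n := n) hf hfnn hν hg hc
    (by simp) (by simp [hn])
  push_cast at hlo hhi
  have hfg : 0 < f t * g t := mul_pos hft hgt
  have hsum : ∀ τ : ℕ → ℝ,
      stieltjesSum (fun s => f (t - s * t) / f t) (fun s => g (s * t) / g t) n τ =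
        (∑ i ∈ Finset.range n, f (t - τ i * t) * (g ((i + 1) / n * t) - g (i / n * t))) /
          (f t * g t) := fun τ => by
    unfold stieltjesSum
    rw [Finset.sum_div]
    refine Finset.sum_congr rfl fun i _ => ?_
    field_simp
  rw [hsum, hsum, show g 0 / g t = f t * g 0 / (f t * g t) by field_simp, ← add_div]
  exact ⟨div_le_div_of_nonneg_right hlo hfg.le, div_le_div_of_nonneg_right hhi hfg.le⟩

end Convolution

theorem stmt2_general (α β : ℝ) (hα : 0 < α) (hβ : 0 < β)
    (f g : ℝ → ℝ) (μ ν : MeasureTheory.Measure ℝ)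
    (hμfin : ∀ t : ℝ, μ (Set.Iic t) < ⊤) (hνfin : ∀ t : ℝ, ν (Set.Iic t) < ⊤)
    (hf : ∀ t : ℝ, f t = (μ (Set.Iic t)).toReal)
    (hg : ∀ t : ℝ, g t = (ν (Set.Iic t)).toReal)
    (hfreg : ∀ lam : ℝ, 0 < lam →
      Tendsto (fun t : ℝ => f (lam * t) / f t) atTop (𝓝 (lam ^ α)))
    (hgreg : ∀ lam : ℝ, 0 < lam →
      Tendsto (fun t : ℝ => g (lam * t) / g t) atTop (𝓝 (lam ^ β)))
    (h : ℝ → ℝ) (hh : ∀ t : ℝ, h t = ∫ y in Set.Icc 0 t, f (t - y) ∂ν) :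
    Tendsto (fun t : ℝ => h t / (f t * g t)) atTop
      (𝓝 (Real.Gamma (1 + α) * Real.Gamma (1 + β) / Real.Gamma (1 + α + β))) := by
  have hfRV : RegularlyVarying f α := hfreg
  have hgRV : RegularlyVarying g β := hgreg
  have hfmono : Monotone f := funext hf ▸ monotone_measureReal_Iic hμfin
  have hgmono : Monotone g := funext hg ▸ monotone_measureReal_Iic hνfin
  have hfnn : ∀ t, 0 ≤ f t := fun t => hf t ▸ ENNReal.toReal_nonneg
  have hgnn : ∀ t, 0 ≤ g t := fun t => hg t ▸ ENNReal.toReal_nonneg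
  have hφ : ∀ s ∈ Icc (0 : ℝ) 1,
      Tendsto (fun t => f (t - s * t) / f t) atTop (𝓝 ((1 - s) ^ α)) := fun s hs =>
    (hfRV.tendsto_of_nonneg hα hfmono hfnn (sub_nonneg.2 hs.2)).congr
      fun t => by rw [sub_mul, one_mul]
  have hG : ∀ s ∈ Icc (0 : ℝ) 1, Tendsto (fun t => g (s * t) / g t) atTop (𝓝 (s ^ β)) :=
    fun s hs => hgRV.tendsto_of_nonneg hβ hgmono hgnn hs.1
  have hbounds : ∀ n ≠ 0, ∀ᶠ t in atTop, h t / (f t * g t) ∈ _ := fun n hn =>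
    ((eventually_ge_atTop 0).and ((hfRV.eventually_pos hfnn).and (hgRV.eventually_pos hgnn))).mono
      fun t ⟨ht, hft, hgt⟩ => hh t ▸
        setIntegral_Icc_sub_div_mem_Icc_stieltjesSum hfmono hfnn hνfin hg ht hft hgt hn
  obtain ⟨hleft, hright⟩ := tendsto_stieltjesSum_one_sub_rpow_rpow hα hβ
  refine tendsto_order.2 ⟨fun a ha => ?_, fun b hb => ?_⟩
  · obtain ⟨n, hna, hn⟩ := ((hright.eventually (lt_mem_nhds ha)).and (eventually_ne_atTop 0)).exists
    filter_upwards [(tendsto_stieltjesSum hφ hG n fun i hi => natCast_add_one_div_mem_Icc hi)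
      |>.eventually (lt_mem_nhds hna), hbounds n hn] with t hat ht
    exact hat.trans_le ht.1
  · obtain ⟨n, hnb, hn⟩ := ((hleft.eventually (gt_mem_nhds hb)).and (eventually_ne_atTop 0)).exists
    have hlim := (hgRV.tendsto_apply_zero_div hβ hgmono hgnn).add
      (tendsto_stieltjesSum hφ hG n fun i hi => natCast_div_mem_Icc hi.le)
    rw [zero_add] at hlim
    filter_upwards [hlim.eventually (gt_mem_nhds hnb), hbounds n hn] with t hbt ht
    exact ht.2.trans_lt hbt

/-- let `f, g` be nondecreasing right-continuous functions on `[0,∞)`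
(vanishing at `0⁻`, represented by the measures `μ, ν` via `f t = μ (Iic t)`,
`g t = ν (Iic t)`), with `f` regularly varying of index `α > 0` and `g` regularly varying
of index `β > 0`, and let `h(t) = ∫_{[0,t]} f(t-y) dg(y)`.  Then
`h(t)/(f(t)g(t)) → Γ(1+α)Γ(1+β)/Γ(1+α+β)` as `t → ∞`. -/
theorem stmt2 (α β : ℝ) (hα : 0 < α) (hβ : 0 < β)
    (f g : ℝ → ℝ) (μ ν : MeasureTheory.Measure ℝ)
    (hμ0 : μ (Set.Iio 0) = 0) (hν0 : ν (Set.Iio 0) = 0)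
    (hμfin : ∀ t : ℝ, μ (Set.Iic t) < ⊤) (hνfin : ∀ t : ℝ, ν (Set.Iic t) < ⊤)
    (hf : ∀ t : ℝ, f t = (μ (Set.Iic t)).toReal)
    (hg : ∀ t : ℝ, g t = (ν (Set.Iic t)).toReal)
    (hfreg : ∀ lam : ℝ, 0 < lam →
      Tendsto (fun t : ℝ => f (lam * t) / f t) atTop (𝓝 (lam ^ α)))
    (hgreg : ∀ lam : ℝ, 0 < lam →
      Tendsto (fun t : ℝ => g (lam * t) / g t) atTop (𝓝 (lam ^ β)))
    (h : ℝ → ℝ) (hh : ∀ t : ℝ, h t = ∫ y in Set.Icc 0 t, f (t - y) ∂ν) :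
    Tendsto (fun t : ℝ => h t / (f t * g t)) atTop
      (𝓝 (Real.Gamma (1 + α) * Real.Gamma (1 + β) / Real.Gamma (1 + α + β))) :=
  stmt2_general α β hα hβ f g μ ν hμfin hνfin hf hg hfreg hgreg h hh
end

section
/- Let f : [0,∞) → [0,∞) be nondecreasing and right-continuous with f(t) ~ A e^{βt} t^α ℓ(t) as t → ∞, where A, α, β > 0 and ℓ slowly varying. Then the exponentially tilted Stieltjes integral F(t) := ∫_{[0,t]} e^{−βy} df(y) satisfies F(t) ~ (βA/(1+α)) t^{1+α} ℓ(t) as t → ∞. -/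
/-!
Integrating by parts, `F t = h t + β ∫₀ᵗ h` with `h s = e^{-βs} f s`. The hypothesis says
`h t ~ A t^α ℓ t`, so `h` is regularly varying of index `α`, and Karamata's theorem gives
`∫₀ᵗ h ~ t h t / (1 + α)`, which dominates the boundary term `h t`. Karamata's theorem follows
by integrating Potter's bounds `h s / h t ≤ e^ε (s/t)^(α-ε)` (and the matching lower bound)
over `[T, t]`; these come from the uniform convergence theorem for `log h (e^x) - α x`, proved
by the Csiszár–Erdős measure argument.
-/

open MeasureTheory Set Filter Topology
open scoped ENNReal

section UniformConvergence

variable {k : ℝ → ℝ}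

lemma tendsto_volume_setOf_le_abs_add_sub (hk : Measurable k)
    (hlim : ∀ u, Tendsto (fun x => k (x + u) - k x) atTop (𝓝 0)) {ε : ℝ} (hε : 0 < ε) :
    Tendsto (fun x => volume {v ∈ Icc (0 : ℝ) 2 | ε ≤ |k (x + v) - k x|}) atTop (𝓝 0) := by
  have hmeas (x : ℝ) : MeasurableSet {v ∈ Icc (0 : ℝ) 2 | ε ≤ |k (x + v) - k x|} :=
    measurableSet_Icc.inter
      (measurableSet_le measurable_const ((hk.comp (measurable_const_add x)).sub_const _).abs)
  simp_rw [← lintegral_indicator_one (hmeas _)]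
  rw [← lintegral_zero]
  refine tendsto_lintegral_filter_of_dominated_convergence ((Icc (0 : ℝ) 2).indicator 1)
    (.of_forall fun x => measurable_one.indicator (hmeas x))
    (.of_forall fun x => .of_forall fun v => indicator_le_indicator_of_subset inter_subset_left
      (fun _ => zero_le) v) (by simp) (.of_forall fun v => ?_)
  refine tendsto_const_nhds.congr' ?_
  filter_upwards [(hlim v).abs.eventually_lt_const (by simpa using hε)] with x hx
  exact (indicator_of_notMem (fun hv => hx.not_ge hv.2) _).symm

lemma eventually_forall_Icc_abs_add_sub_lt (hk : Measurable k)
    (hlim : ∀ u, Tendsto (fun x => k (x + u) - k x) atTop (𝓝 0)) {ε : ℝ} (hε : 0 < ε) :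
    ∀ᶠ x in atTop, ∀ u ∈ Icc (0 : ℝ) 1, |k (x + u) - k x| < ε := by
  set V : ℝ → Set ℝ := fun x => {v ∈ Icc (0 : ℝ) 2 | ε / 2 ≤ |k (x + v) - k x|}
  obtain ⟨X, hX⟩ := eventually_atTop.1 <|
    (tendsto_volume_setOf_le_abs_add_sub hk hlim (half_pos hε)).eventually_lt_const
      (show (0 : ℝ≥0∞) < 2⁻¹ by simp)
  filter_upwards [eventually_ge_atTop X] with x hx u hu
  -- `[1, 2]` has measure `1`, so it is not covered by `V x` and a translate of `V (x + u)`.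
  have hcover : ¬ Icc (1 : ℝ) 2 ⊆ V x ∪ (· - u) ⁻¹' V (x + u) := fun hsub => by
    have hpre : volume ((· - u) ⁻¹' V (x + u)) = volume (V (x + u)) := by
      simp [sub_eq_add_neg]
    have := (measure_mono (μ := volume) hsub).trans (measure_union_le _ _)
    rw [hpre, Real.volume_Icc] at this
    have hlt := ENNReal.add_lt_add (hX x hx) (hX (x + u) (by linarith [hu.1]))
    rw [ENNReal.inv_two_add_inv_two] at hlt
    norm_num at this
    exact (this.trans_lt hlt).false
  obtain ⟨w, hw, hwV⟩ := not_subset.1 hcover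
  simp only [mem_union, mem_preimage, not_or, V, mem_ofPred_eq, not_and, not_le] at hwV
  have h1 := hwV.1 ⟨by linarith [hw.1], hw.2⟩
  have h2 := hwV.2 ⟨by linarith [hw.1, hu.2], by linarith [hw.2, hu.1]⟩
  rw [add_add_sub_cancel] at h2
  linarith [abs_sub_le (k (x + u)) (k (x + w)) (k x), abs_sub_comm (k (x + u)) (k (x + w))]

lemma eventually_forall_abs_add_sub_le (hk : Measurable k)
    (hlim : ∀ u, Tendsto (fun x => k (x + u) - k x) atTop (𝓝 0)) {ε : ℝ} (hε : 0 < ε) :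
    ∀ᶠ x in atTop, ∀ u, 0 ≤ u → |k (x + u) - k x| ≤ ε * (u + 1) := by
  obtain ⟨X, hX⟩ := eventually_atTop.1 (eventually_forall_Icc_abs_add_sub_lt hk hlim hε)
  filter_upwards [eventually_ge_atTop X] with x hx
  have key (n : ℕ) : ∀ u ∈ Icc (0 : ℝ) n, |k (x + u) - k x| ≤ ε * n := by
    induction n with
    | zero =>
      intro u hu
      obtain rfl : u = 0 := le_antisymm (by simpa using hu.2) hu.1
      simp
    | succ n ih =>
      intro u hu
      push_cast at hu ⊢
      rcases le_or_gt u n with hun | hnu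
      · linarith [ih u ⟨hu.1, hun⟩]
      · have h1 := hX (x + n) (by linarith [n.cast_nonneg (α := ℝ)]) (u - n)
          ⟨by linarith, by linarith [hu.2]⟩
        have h2 := ih n ⟨n.cast_nonneg, le_rfl⟩
        rw [add_add_sub_cancel] at h1
        calc |k (x + u) - k x| ≤ |k (x + u) - k (x + n)| + |k (x + n) - k x| := abs_sub_le _ _ _
          _ ≤ ε * (n + 1) := by linarith
  intro u hu
  exact (key ⌈u⌉₊ u ⟨hu, Nat.le_ceil u⟩).trans
    (mul_le_mul_of_nonneg_left (Nat.ceil_lt_add_one hu).le hε.le)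

end UniformConvergence

open Real

lemma integral_div_rpow {T t c : ℝ} (ht : 0 < t) (hc : -1 < c) :
    ∫ s in T..t, (s / t) ^ c = t * (1 - (T / t) ^ (c + 1)) / (c + 1) := by
  rw [intervalIntegral.integral_comp_div (fun s => s ^ c) ht.ne', div_self ht.ne',
    integral_rpow (Or.inl hc), one_rpow, smul_eq_mul, mul_div_assoc]

lemma intervalIntegrable_div_rpow {T t c : ℝ} (hT : 0 < T) (hTt : T ≤ t) :
    IntervalIntegrable (fun s => (s / t) ^ c) volume T t :=
  ((continuousOn_id.div_const t).rpow_const fun _ hs => Or.inl (div_pos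
    (hT.trans_le (uIcc_of_le hTt ▸ hs).1) (hT.trans_le hTt)).ne').intervalIntegrable

lemma integral_le_of_le_mul_div_rpow {h : ℝ → ℝ} {a c T t : ℝ} (hT : 0 < T) (hTt : T ≤ t)
    (hc : -1 < c) (hh : IntervalIntegrable h volume T t)
    (hle : ∀ s ∈ Icc T t, h s ≤ a * (s / t) ^ c) :
    ∫ s in T..t, h s ≤ a * (t * (1 - (T / t) ^ (c + 1)) / (c + 1)) := by
  rw [← integral_div_rpow (hT.trans_le hTt) hc, ← intervalIntegral.integral_const_mul]
  exact intervalIntegral.integral_mono_on hTt hh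
    ((intervalIntegrable_div_rpow hT hTt).const_mul a) hle

lemma le_integral_of_mul_div_rpow_le {h : ℝ → ℝ} {a c T t : ℝ} (hT : 0 < T) (hTt : T ≤ t)
    (hc : -1 < c) (hh : IntervalIntegrable h volume T t)
    (hle : ∀ s ∈ Icc T t, a * (s / t) ^ c ≤ h s) :
    a * (t * (1 - (T / t) ^ (c + 1)) / (c + 1)) ≤ ∫ s in T..t, h s := by
  rw [← integral_div_rpow (hT.trans_le hTt) hc, ← intervalIntegral.integral_const_mul]
  exact intervalIntegral.integral_mono_on hTt
    ((intervalIntegrable_div_rpow hT hTt).const_mul a) hh hle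

lemma tendsto_const_div_rpow_atTop (T : ℝ) {c : ℝ} (hc : 0 < c) :
    Tendsto (fun t => (T / t) ^ c) atTop (𝓝 0) := by
  simpa [zero_rpow hc.ne'] using
    (tendsto_const_nhds.div_atTop tendsto_id).rpow_const (p := c) (Or.inr hc.le)

lemma tendsto_of_forall_eventually_between {ι κ : Type*} {l : Filter ι} {l' : Filter κ}
    [l'.NeBot] {g : ι → ℝ} {lo hi : κ → ℝ} {L : ℝ} (hlo : Tendsto lo l' (𝓝 L))
    (hhi : Tendsto hi l' (𝓝 L)) (hg : ∀ᶠ ε in l', ∀ᶠ t in l, lo ε < g t ∧ g t < hi ε) :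
    Tendsto g l (𝓝 L) := by
  refine tendsto_order.2 ⟨fun a ha => ?_, fun a ha => ?_⟩
  · obtain ⟨ε, hε, hεg⟩ := ((hlo.eventually (eventually_gt_nhds ha)).and hg).exists
    exact hεg.mono fun t ht => hε.trans ht.1
  · obtain ⟨ε, hε, hεg⟩ := ((hhi.eventually (eventually_lt_nhds ha)).and hg).exists
    exact hεg.mono fun t ht => ht.2.trans hε

def IsRegularlyVarying (h : ℝ → ℝ) (ρ : ℝ) : Prop :=
  ∀ lam : ℝ, 0 < lam → Tendsto (fun t => h (lam * t) / h t) atTop (𝓝 (lam ^ ρ))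

namespace IsRegularlyVarying

variable {h ℓ : ℝ → ℝ} {ρ σ : ℝ}

lemma const_mul_rpow_mul (hℓ : IsRegularlyVarying ℓ σ) {c : ℝ} (hc : c ≠ 0) (r : ℝ) :
    IsRegularlyVarying (fun t => c * t ^ r * ℓ t) (r + σ) := by
  intro lam hlam
  rw [rpow_add hlam]
  refine ((hℓ lam hlam).const_mul (lam ^ r)).congr' ?_
  filter_upwards [eventually_gt_atTop 0] with t ht
  have hct : c * t ^ r ≠ 0 := mul_ne_zero hc (rpow_pos_of_pos ht r).ne'
  rw [mul_rpow hlam.le ht.le, show c * (lam ^ r * t ^ r) * ℓ (lam * t)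
    = c * t ^ r * (lam ^ r * ℓ (lam * t)) by ring, mul_div_mul_left _ _ hct, mul_div_assoc]

lemma of_tendsto_div {g : ℝ → ℝ} (hg : IsRegularlyVarying g ρ)
    (hr : Tendsto (fun t => h t / g t) atTop (𝓝 1)) : IsRegularlyVarying h ρ := by
  intro lam hlam
  have hlamt : Tendsto (lam * ·) atTop atTop := tendsto_id.const_mul_atTop hlam
  have hne := hr.eventually_ne one_ne_zero
  have := ((hr.comp hlamt).mul (hg lam hlam)).div hr one_ne_zero
  rw [one_mul, div_one] at this
  refine this.congr' ?_
  filter_upwards [hne, hlamt.eventually hne] with t ht hlt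
  obtain ⟨hht, hgt⟩ := div_ne_zero_iff.1 ht
  obtain ⟨-, hglt⟩ := div_ne_zero_iff.1 hlt
  simp only [Pi.div_apply, Function.comp_apply]
  field_simp

lemma tendsto_log_comp_exp_add_sub (hreg : IsRegularlyVarying h ρ)
    (hpos : ∀ᶠ t in atTop, 0 < h t) (u : ℝ) :
    Tendsto (fun x => (log (h (exp (x + u))) - ρ * (x + u)) - (log (h (exp x)) - ρ * x))
      atTop (𝓝 0) := by
  have hlim := ((continuousAt_log (rpow_pos_of_pos (exp_pos u) ρ).ne').tendsto.comp
    ((hreg _ (exp_pos u)).comp tendsto_exp_atTop)).sub_const (ρ * u)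
  rw [log_rpow (exp_pos u), log_exp, mul_comm, sub_self] at hlim
  refine hlim.congr' ?_
  filter_upwards [tendsto_exp_atTop.eventually hpos,
    (tendsto_exp_atTop.comp (tendsto_atTop_add_const_right _ u tendsto_id)).eventually hpos]
    with x hx hxu
  simp only [Function.comp_apply, id] at hx hxu ⊢
  rw [← exp_add, add_comm u x, log_div hxu.ne' hx.ne']
  ring

lemma eventually_potter (hreg : IsRegularlyVarying h ρ) (hm : Measurable h)
    (hpos : ∀ᶠ t in atTop, 0 < h t) {ε : ℝ} (hε : 0 < ε) :
    ∀ᶠ s in atTop, ∀ t, s ≤ t →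
      h t * exp (-ε) * (s / t) ^ (ρ + ε) ≤ h s ∧ h s ≤ h t * exp ε * (s / t) ^ (ρ - ε) := by
  have hk : Measurable fun x => log (h (exp x)) - ρ * x := by fun_prop
  filter_upwards [tendsto_log_atTop.eventually
      (eventually_forall_abs_add_sub_le hk (hreg.tendsto_log_comp_exp_add_sub hpos) hε),
    eventually_gt_atTop 0, eventually_forall_ge_atTop.2 hpos] with s hlog hs hpos_ge t hst
  have ht : 0 < t := hs.trans_le hst
  have hbound := hlog (log t - log s) (sub_nonneg.2 (log_le_log hs hst))
  rw [add_sub_cancel, exp_log ht, exp_log hs] at hbound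
  obtain ⟨hlo, hup⟩ := abs_le.1 hbound
  have hst' : log (s / t) = log s - log t := log_div hs.ne' ht.ne'
  have hhs := hpos_ge s le_rfl
  have hht := hpos_ge t hst
  constructor
  · rw [← log_le_log_iff (by positivity) hhs, log_mul (by positivity) (by positivity),
      log_mul hht.ne' (exp_pos _).ne', log_exp, log_rpow (div_pos hs ht), hst']
    linarith
  · rw [← log_le_log_iff hhs (by positivity), log_mul (by positivity) (by positivity),
      log_mul hht.ne' (exp_pos _).ne', log_exp, log_rpow (div_pos hs ht), hst']
    linarith

lemma tendsto_mul_self_atTop (hreg : IsRegularlyVarying h ρ) (hm : Measurable h)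
    (hpos : ∀ᶠ t in atTop, 0 < h t) (hρ : -1 < ρ) : Tendsto (fun t => t * h t) atTop atTop := by
  obtain ⟨ε, hε, hερ⟩ : ∃ ε, 0 < ε ∧ ε < 1 + ρ := ⟨(1 + ρ) / 2, by linarith, by linarith⟩
  obtain ⟨T, hT⟩ := eventually_atTop.1 <| (hreg.eventually_potter hm hpos hε).and
    ((eventually_gt_atTop 0).and hpos)
  obtain ⟨hpotter, hT0, hhT⟩ := hT T le_rfl
  have hK : 0 < h T / (exp ε * T ^ (ρ - ε)) := by positivity
  refine tendsto_atTop_mono' _ ?_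
    ((tendsto_rpow_atTop (by linarith : 0 < ρ - ε + 1)).const_mul_atTop hK)
  filter_upwards [eventually_ge_atTop T] with t ht
  have ht0 : 0 < t := hT0.trans_le ht
  have hTt := (hpotter t ht).2
  rw [div_rpow hT0.le ht0.le, mul_div_assoc', le_div_iff₀ (rpow_pos_of_pos ht0 _)] at hTt
  rw [rpow_add_one ht0.ne', div_mul_eq_mul_div, div_le_iff₀ (by positivity)]
  calc h T * (t ^ (ρ - ε) * t) = t * (h T * t ^ (ρ - ε)) := by ring
    _ ≤ t * (h t * exp ε * T ^ (ρ - ε)) := by gcongr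
    _ = t * h t * (exp ε * T ^ (ρ - ε)) := by ring

lemma eventually_integral_div_mul_self_between (hreg : IsRegularlyVarying h ρ)
    (hm : Measurable h) (hpos : ∀ᶠ t in atTop, 0 < h t)
    (hint : ∀ t, IntervalIntegrable h volume 0 t) {ε : ℝ} (hε : 0 < ε) (hερ : ε < 1 + ρ) :
    ∀ᶠ t in atTop, exp (-ε) / (ρ + ε + 1) - ε < (∫ s in (0)..t, h s) / (t * h t) ∧
      (∫ s in (0)..t, h s) / (t * h t) < exp ε / (ρ - ε + 1) + ε := by
  obtain ⟨T, hT⟩ := eventually_atTop.1 <|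
    (hreg.eventually_potter hm hpos hε).and (eventually_gt_atTop 0)
  have hT0 := (hT T le_rfl).2
  set C := ∫ s in (0)..T, h s
  have hTt (t : ℝ) : IntervalIntegrable h volume T t := (hint T).symm.trans (hint t)
  have hC : Tendsto (fun t => C / (t * h t)) atTop (𝓝 0) :=
    tendsto_const_nhds.div_atTop (hreg.tendsto_mul_self_atTop hm hpos (by linarith))
  have hlim (b c : ℝ) (hc : -1 < c) : Tendsto
      (fun t => C / (t * h t) + b * ((1 - (T / t) ^ (c + 1)) / (c + 1))) atTop
      (𝓝 (b / (c + 1))) := by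
    simpa [div_eq_mul_inv] using hC.add ((((tendsto_const_nhds (x := (1 : ℝ))).sub
      (tendsto_const_div_rpow_atTop T (by linarith : 0 < c + 1))).div_const (c + 1)).const_mul b)
  filter_upwards [(hlim (exp (-ε)) (ρ + ε) (by linarith)).eventually_const_lt (sub_lt_self _ hε),
    (hlim (exp ε) (ρ - ε) (by linarith)).eventually_lt_const (lt_add_of_pos_right _ hε),
    (hreg.tendsto_mul_self_atTop hm hpos (by linarith)).eventually_gt_atTop 0,
    eventually_ge_atTop T] with t hlo hhi hth ht
  have hup : (∫ s in T..t, h s) / (t * h t)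
      ≤ exp ε * ((1 - (T / t) ^ (ρ - ε + 1)) / (ρ - ε + 1)) := by
    rw [div_le_iff₀ hth]
    exact (integral_le_of_le_mul_div_rpow hT0 ht (by linarith) (hTt t)
      fun s hs => ((hT s hs.1).1 t hs.2).2).trans_eq (by ring)
  have hdown : exp (-ε) * ((1 - (T / t) ^ (ρ + ε + 1)) / (ρ + ε + 1))
      ≤ (∫ s in T..t, h s) / (t * h t) := by
    rw [le_div_iff₀ hth]
    exact (le_integral_of_mul_div_rpow_le hT0 ht (by linarith) (hTt t)
      fun s hs => ((hT s hs.1).1 t hs.2).1).trans_eq' (by ring)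
  rw [← intervalIntegral.integral_add_adjacent_intervals (hint T) (hTt t), add_div]
  constructor <;> linarith

theorem tendsto_integral_div_mul_self (hreg : IsRegularlyVarying h ρ) (hm : Measurable h)
    (hpos : ∀ᶠ t in atTop, 0 < h t) (hint : ∀ t, IntervalIntegrable h volume 0 t)
    (hρ : -1 < ρ) :
    Tendsto (fun t => (∫ s in (0)..t, h s) / (t * h t)) atTop (𝓝 (1 + ρ)⁻¹) := by
  have hlo : ContinuousAt (fun ε => exp (-ε) / (ρ + ε + 1) - ε) 0 :=
    ((by fun_prop : ContinuousAt (fun ε => exp (-ε)) 0).div (by fun_prop)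
      (by simp; linarith)).sub continuousAt_id
  have hhi : ContinuousAt (fun ε => exp ε / (ρ - ε + 1) + ε) 0 :=
    ((by fun_prop : ContinuousAt exp 0).div (by fun_prop) (by simp; linarith)).add
      continuousAt_id
  have hval : (1 + ρ)⁻¹ = exp 0 / (ρ + 0 + 1) := by simp [add_comm]
  refine tendsto_of_forall_eventually_between (l' := 𝓝[>] (0 : ℝ))
    (by simpa [hval] using hlo.continuousWithinAt.tendsto)
    (by simpa [hval] using hhi.continuousWithinAt.tendsto) ?_
  filter_upwards [Ioo_mem_nhdsGT (show (0 : ℝ) < 1 + ρ by linarith)] with ε hε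
  exact hreg.eventually_integral_div_mul_self_between hm hpos hint hε.1 hε.2

end IsRegularlyVarying

lemma setIntegral_Icc_eq_mul_measureReal_sub_integral {μ : Measure ℝ} {φ φ' : ℝ → ℝ} {a b : ℝ}
    (hab : a ≤ b) (hμ : μ (Icc a b) ≠ ∞) (hφ : ∀ s, HasDerivAt φ (φ' s) s)
    (hφ' : Continuous φ') :
    ∫ y in Icc a b, φ y ∂μ = φ b * μ.real (Icc a b) - ∫ s in a..b, φ' s * μ.real (Icc a s) := by
  have := isFiniteMeasure_restrict.2 hμ
  set G : ℝ → ℝ → ℝ := fun y s => (Ici y).indicator φ' s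
  have hφ_eq (y : ℝ) (hy : y ∈ Icc a b) : φ y = φ b - ∫ s in Icc a b, G y s := by
    have hI : Ici y ∩ Icc a b = Icc y b := by
      ext s; simp only [mem_inter_iff, mem_Ici, mem_Icc]; grind
    rw [integral_indicator measurableSet_Ici, Measure.restrict_restrict measurableSet_Ici, hI,
      integral_Icc_eq_integral_Ioc, ← intervalIntegral.integral_of_le hy.2,
      intervalIntegral.integral_eq_sub_of_hasDerivAt (fun s _ => hφ s)
        (hφ'.intervalIntegrable _ _)]
    ring
  have hG : Integrable (Function.uncurry G)
      ((μ.restrict (Icc a b)).prod (volume.restrict (Icc a b))) := by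
    obtain ⟨M, hM⟩ := isCompact_Icc.exists_bound_of_continuousOn hφ'.continuousOn
    have hmeas : Measurable (Function.uncurry G) :=
      (hφ'.measurable.comp measurable_snd).indicator
        (measurableSet_le measurable_fst measurable_snd)
    refine Integrable.of_bound hmeas.aestronglyMeasurable M ?_
    exact Measure.quasiMeasurePreserving_snd.ae (ae_restrict_mem measurableSet_Icc) |>.mono
      fun p hp => (norm_indicator_le_norm_self _ _).trans (hM _ hp)
  have hinner (s : ℝ) (hs : s ∈ Icc a b) : ∫ y in Icc a b, G y s ∂μ = φ' s * μ.real (Icc a s) := by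
    have hI : Iic s ∩ Icc a b = Icc a s := by
      ext y; simp only [mem_inter_iff, mem_Iic, mem_Icc]; grind
    have hG' : (G · s) = (Iic s).indicator fun _ => φ' s := by
      ext y; by_cases hys : y ≤ s <;> simp [G, hys]
    rw [hG', integral_indicator_const _ measurableSet_Iic,
      measureReal_restrict_apply measurableSet_Iic, hI, smul_eq_mul, mul_comm]
  have hG_left : Integrable (fun y => ∫ s in Icc a b, G y s) (μ.restrict (Icc a b)) :=
    hG.integral_prod_left
  calc ∫ y in Icc a b, φ y ∂μ = ∫ y in Icc a b, (φ b - ∫ s in Icc a b, G y s) ∂μ :=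
        setIntegral_congr_fun measurableSet_Icc hφ_eq
    _ = φ b * μ.real (Icc a b) - ∫ y in Icc a b, (∫ s in Icc a b, G y s) ∂μ := by
        rw [integral_sub (integrable_const _) hG_left, setIntegral_const, smul_eq_mul, mul_comm]
    _ = φ b * μ.real (Icc a b) - ∫ s in Icc a b, ∫ y in Icc a b, G y s ∂μ := by
        rw [integral_integral_swap hG]
    _ = φ b * μ.real (Icc a b) - ∫ s in a..b, φ' s * μ.real (Icc a s) := by
        rw [setIntegral_congr_fun measurableSet_Icc hinner, integral_Icc_eq_integral_Ioc,
          ← intervalIntegral.integral_of_le hab]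

lemma setIntegral_Icc_exp_neg_mul {μ : Measure ℝ} (β : ℝ) {t : ℝ} (ht : 0 ≤ t)
    (hμ : μ (Icc 0 t) ≠ ∞) :
    ∫ y in Icc 0 t, exp (-β * y) ∂μ
      = exp (-β * t) * μ.real (Icc 0 t) + β * ∫ s in (0)..t, exp (-β * s) * μ.real (Icc 0 s) := by
  have hφ (s : ℝ) : HasDerivAt (fun y => exp (-β * y)) (-β * exp (-β * s)) s := by
    simpa [mul_comm] using ((hasDerivAt_id s).const_mul (-β)).exp
  rw [setIntegral_Icc_eq_mul_measureReal_sub_integral ht hμ hφ (by fun_prop)]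
  simp only [mul_assoc, intervalIntegral.integral_const_mul]
  ring

lemma tendsto_add_mul_integral_div {h g : ℝ → ℝ} {β c : ℝ} (hβ : β ≠ 0) (hc : c ≠ 0)
    (hr : Tendsto (fun t => h t / g t) atTop (𝓝 1))
    (hK : Tendsto (fun t => (∫ s in (0)..t, h s) / (t * h t)) atTop (𝓝 c⁻¹)) :
    Tendsto (fun t => (h t + β * ∫ s in (0)..t, h s) / (β / c * t * g t)) atTop (𝓝 1) := by
  have hlim := ((tendsto_const_nhds (x := c / β)).div_atTop tendsto_id |>.mul hr).add
    ((hK.mul hr).const_mul c)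
  rw [zero_mul, zero_add, mul_one, mul_inv_cancel₀ hc] at hlim
  refine hlim.congr' ?_
  filter_upwards [hr.eventually_ne one_ne_zero, eventually_ne_atTop 0] with t hne ht
  obtain ⟨hh, hg⟩ := div_ne_zero_iff.1 hne
  simp only [id]
  field_simp

/-- let `f : [0,∞) → [0,∞)` be nondecreasing and right-continuous
(vanishing at `0⁻`, represented by `f t = μ (Iic t)`) with
`f(t) ~ A e^{βt} t^α ℓ(t)` as `t → ∞`, where `A, α, β > 0` and `ℓ` is slowly varying.
Then `F(t) := ∫_{[0,t]} e^{-βy} df(y)` satisfies `F(t) ~ (βA/(1+α)) t^{1+α} ℓ(t)`. -/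
theorem stmt4 (A α β : ℝ) (hA : 0 < A) (hα : 0 < α) (hβ : 0 < β)
    (ℓ : ℝ → ℝ)
    (hslow : ∀ lam : ℝ, 0 < lam →
      Tendsto (fun t : ℝ => ℓ (lam * t) / ℓ t) atTop (𝓝 1))
    (f : ℝ → ℝ) (μ : MeasureTheory.Measure ℝ)
    (hsupp : μ (Set.Iio 0) = 0) (hfin : ∀ t : ℝ, μ (Set.Iic t) < ⊤)
    (hrep : ∀ t : ℝ, f t = (μ (Set.Iic t)).toReal)
    (hasymp : Tendsto
      (fun t : ℝ => f t / (A * Real.exp (β * t) * t ^ α * ℓ t)) atTop (𝓝 1))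
    (F : ℝ → ℝ) (hF : ∀ t : ℝ, F t = ∫ y in Set.Icc 0 t, Real.exp (-β * y) ∂μ) :
    Tendsto (fun t : ℝ => F t / (β * A / (1 + α) * t ^ (1 + α) * ℓ t)) atTop (𝓝 1) := by
  have hf_mono : Monotone f := fun s t hst => by
    rw [hrep, hrep]
    exact ENNReal.toReal_mono (hfin t).ne (measure_mono (Iic_subset_Iic.2 hst))
  have hμf (s : ℝ) : μ.real (Icc 0 s) = f s := by
    rw [hrep, measureReal_def, ← measure_sdiff_null (s := Iic s) hsupp]
    congr 2
    ext y
    simp [and_comm]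
  set h : ℝ → ℝ := fun s => exp (-β * s) * f s
  have hr : Tendsto (fun t => h t / (A * t ^ α * ℓ t)) atTop (𝓝 1) :=
    hasymp.congr fun t => by simp only [h, neg_mul, exp_neg]; ring
  have hpos : ∀ᶠ t in atTop, 0 < h t := (hr.eventually_ne one_ne_zero).mono fun t ht =>
    (mul_nonneg (exp_pos _).le (hrep t ▸ ENNReal.toReal_nonneg)).lt_of_ne'
      (div_ne_zero_iff.1 ht).1
  have hreg : IsRegularlyVarying h α := by
    have hℓ : IsRegularlyVarying ℓ 0 := fun lam hlam => by simpa using hslow lam hlam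
    simpa using (hℓ.const_mul_rpow_mul hA.ne' α).of_tendsto_div hr
  have hK := hreg.tendsto_integral_div_mul_self
    ((continuous_exp.comp (continuous_const_mul (-β))).measurable.mul hf_mono.measurable) hpos
    (fun t => hf_mono.intervalIntegrable.continuousOn_mul (by fun_prop)) (by linarith)
  refine (tendsto_add_mul_integral_div hβ.ne' (by linarith) hr hK).congr' ?_
  filter_upwards [eventually_gt_atTop 0] with t ht
  rw [hF, setIntegral_Icc_exp_neg_mul β ht.le
    (measure_mono Icc_subset_Iic_self |>.trans_lt (hfin t)).ne, rpow_add ht, rpow_one]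
  simp only [hμf, h]
  ring
end

section
/- Let W : [0,∞) → ℝ be continuous with W(0)=0, let α > 0, and for j ≥ 1 define W_j(u) = j∫_0^u W(u−y) d(y^{α(j−1)}) (with W_1 = W). Then for every integer k ≥ 1 and u ≥ 0: ∫_0^u W(u−y) d(y^{αk}) + (Γ(1+αk)/(Γ(1+α)Γ(1+α(k−1)))) ∫_0^u W_k(u−y) d(y^α) = W_{k+1}(u). -/
open MeasureTheory Set Filter Topology intervalIntegral

/-- The Lebesgue–Stieltjes integral `∫_0^u f(u-y) d(y^β) = β ∫_0^u f(u-y) y^{β-1} dy`. -/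
noncomputable def LSint (f : ℝ → ℝ) (β : ℝ) (u : ℝ) : ℝ :=
  β * ∫ y in (0:ℝ)..u, f (u - y) * y ^ (β - 1)

/-- `W_1 = W` and, for `j ≥ 2`, `W_j(u) = j ∫_0^u W(u-y) d(y^{α(j-1)})`. -/
noncomputable def Wfun (W : ℝ → ℝ) (α : ℝ) : ℕ → ℝ → ℝ
  | 1 => W
  | j => fun u => j * LSint W (α * ((j : ℝ) - 1)) u

/-!
Substituting `z = y + t`, the iterated integral `LSint (LSint f b) a u` becomes an integral over
the triangle `0 < y < z ≤ u`. Integrating first in `y` produces the Beta integral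
`∫₀^z y^(a-1) (z-y)^(b-1) dy = Γ(a)Γ(b)/Γ(a+b) · z^(a+b-1)`, whence the semigroup law
`LSint (LSint f b) a = Γ(1+a)Γ(1+b)/Γ(1+a+b) · LSint f (a+b)`.
For `k ≥ 2` we have `W_k = k · LSint W (α(k-1))`, and the theorem is the case `a = α`,
`b = α(k-1)`; for `k = 1` both sides reduce to `2 · LSint W α u`.
-/

theorem integral_rpow_mul_sub_rpow {a b z : ℝ} (ha : 0 < a) (hb : 0 < b) (hz : 0 < z) :
    ∫ y in (0:ℝ)..z, y ^ (a - 1) * (z - y) ^ (b - 1)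
      = Real.Gamma a * Real.Gamma b / Real.Gamma (a + b) * z ^ (a + b - 1) := by
  have hΓ : Complex.Gamma (a + b) ≠ 0 := by
    rw [← Complex.ofReal_add, Complex.Gamma_ofReal]
    exact_mod_cast (Real.Gamma_pos_of_pos (add_pos ha hb)).ne'
  have hβ : Complex.betaIntegral a b = Complex.Gamma a * Complex.Gamma b / Complex.Gamma (a + b) :=
    eq_div_of_mul_eq hΓ <| by
      rw [Complex.Gamma_mul_Gamma_eq_betaIntegral (by simpa) (by simpa), mul_comm]
  have hcast : ∫ y in (0:ℝ)..z, ((y ^ (a - 1) * (z - y) ^ (b - 1) : ℝ) : ℂ)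
      = ∫ y in (0:ℝ)..z, (y : ℂ) ^ ((a : ℂ) - 1) * ((z : ℂ) - y) ^ ((b : ℂ) - 1) := by
    refine integral_congr fun y hy => ?_
    rw [uIcc_of_le hz.le] at hy
    push_cast [Complex.ofReal_cpow hy.1, Complex.ofReal_cpow (sub_nonneg.2 hy.2)]
    rfl
  apply Complex.ofReal_injective
  rw [← intervalIntegral.integral_ofReal, hcast, Complex.betaIntegral_scaled _ _ hz, hβ]
  push_cast [Complex.ofReal_cpow hz.le, ← Complex.Gamma_ofReal]
  ring

def triangle (u : ℝ) : Set (ℝ × ℝ) := {p | 0 < p.1 ∧ p.1 < p.2 ∧ p.2 ≤ u}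

theorem measurableSet_triangle (u : ℝ) : MeasurableSet (triangle u) :=
  (measurableSet_lt measurable_const measurable_fst).inter
    ((measurableSet_lt measurable_fst measurable_snd).inter
      (measurableSet_le measurable_snd measurable_const))

theorem integrableOn_Ioc_rpow_sub_one {a : ℝ} (ha : 0 < a) (u : ℝ) :
    IntegrableOn (fun y : ℝ => y ^ (a - 1)) (Ioc 0 u) :=
  (intervalIntegrable_rpow' (by linarith) : IntervalIntegrable _ volume 0 u).1

theorem integrableOn_triangle_rpow_mul_rpow {a b : ℝ} (ha : 0 < a) (hb : 0 < b) (u : ℝ) :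
    IntegrableOn (fun p : ℝ × ℝ => p.1 ^ (a - 1) * (p.2 - p.1) ^ (b - 1)) (triangle u) := by
  rw [Measure.volume_eq_prod,
    ← (measurePreserving_prod_add volume volume).integrableOn_comp_preimage
      (MeasurableEquiv.shearAddRight ℝ).measurableEmbedding]
  -- under the shear `(y, t) ↦ (y, y + t)` the kernel becomes `y ^ (a - 1) * t ^ (b - 1)`
  have hprod : IntegrableOn (fun p : ℝ × ℝ => p.1 ^ (a - 1) * p.2 ^ (b - 1))
      (Ioc 0 u ×ˢ Ioc 0 u) (volume.prod volume) := by
    rw [IntegrableOn, ← Measure.prod_restrict]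
    exact (integrableOn_Ioc_rpow_sub_one ha u).mul_prod (integrableOn_Ioc_rpow_sub_one hb u)
  refine (hprod.mono_set ?_).congr_fun (fun p _ => ?_) ?_
  · rintro ⟨y, t⟩ ⟨hy, hyt, ht⟩
    simp only at hy hyt ht
    constructor <;> constructor <;> simp only <;> linarith
  · simp
  · exact (measurableSet_triangle u).preimage (by fun_prop)

section Swap

variable {E : Type*} [NormedAddCommGroup E] [NormedSpace ℝ E] {u : ℝ} (F : ℝ × ℝ → E)

theorem integral_indicator_triangle_left (y : ℝ) :
    ∫ z, (triangle u).indicator F (y, z)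
      = (Ioc 0 u).indicator (fun y => ∫ z in Ioc y u, F (y, z)) y := by
  by_cases hy : y ∈ Ioc 0 u
  · rw [indicator_of_mem hy, ← MeasureTheory.integral_indicator measurableSet_Ioc]
    congr 1 with z
    simp only [indicator, triangle, mem_ofPred_eq, mem_Ioc, hy.1, true_and]
  · rw [indicator_of_notMem hy]
    suffices ∀ z, (triangle u).indicator F (y, z) = 0 by simp [this]
    exact fun z => indicator_of_notMem (s := triangle u)
      (fun ⟨h0, hyz, hz⟩ => hy ⟨h0, hyz.le.trans hz⟩) F

theorem integral_indicator_triangle_right (z : ℝ) :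
    ∫ y, (triangle u).indicator F (y, z)
      = (Ioc 0 u).indicator (fun z => ∫ y in Ioo 0 z, F (y, z)) z := by
  by_cases hz : z ∈ Ioc 0 u
  · rw [indicator_of_mem hz, ← MeasureTheory.integral_indicator measurableSet_Ioo]
    congr 1 with y
    simp only [indicator, triangle, mem_ofPred_eq, mem_Ioo, hz.2, and_true]
  · rw [indicator_of_notMem hz]
    suffices ∀ y, (triangle u).indicator F (y, z) = 0 by simp [this]
    exact fun y => indicator_of_notMem (s := triangle u)
      (fun ⟨h0, hyz, hz'⟩ => hz ⟨h0.trans hyz, hz'⟩) F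

theorem integral_Ioc_integral_Ioc_eq_integral_Ioc_integral_Ioo
    (hF : IntegrableOn F (triangle u)) :
    ∫ y in Ioc 0 u, ∫ z in Ioc y u, F (y, z)
      = ∫ z in Ioc 0 u, ∫ y in Ioo 0 z, F (y, z) := by
  have hI : Integrable (Function.uncurry fun y z => (triangle u).indicator F (y, z))
      (volume.prod volume) :=
    hF.integrable_indicator (measurableSet_triangle u)
  rw [← MeasureTheory.integral_indicator measurableSet_Ioc,
    ← MeasureTheory.integral_indicator measurableSet_Ioc]
  simp only [← integral_indicator_triangle_left, ← integral_indicator_triangle_right]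
  exact integral_integral_swap hI

end Swap

theorem LSint_const_mul (c : ℝ) (f : ℝ → ℝ) (β u : ℝ) :
    LSint (fun v => c * f v) β u = c * LSint f β u := by
  simp only [LSint, mul_assoc, intervalIntegral.integral_const_mul]
  ring

theorem LSint_sub (f : ℝ → ℝ) (b u y : ℝ) :
    LSint f b (u - y) = b * ∫ z in y..u, (z - y) ^ (b - 1) * f (u - z) := by
  have h := intervalIntegral.integral_comp_sub_right (fun x => x ^ (b - 1) * f (u - y - x)) y
    (a := y) (b := u)
  simp only [sub_self, sub_sub_sub_cancel_right] at h
  rw [LSint, h]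
  simp_rw [mul_comm (f _)]

theorem LSint_LSint {a b u : ℝ} (ha : 0 < a) (hb : 0 < b) (hu : 0 ≤ u) {f : ℝ → ℝ}
    (hf : ContinuousOn f (Icc 0 u)) :
    LSint (LSint f b) a u
      = Real.Gamma (1 + a) * Real.Gamma (1 + b) / Real.Gamma (1 + a + b) * LSint f (a + b) u := by
  have hint : IntegrableOn
      (fun p : ℝ × ℝ => p.1 ^ (a - 1) * ((p.2 - p.1) ^ (b - 1) * f (u - p.2)))
      (triangle u) := by
    simp_rw [← mul_assoc]
    refine (integrableOn_triangle_rpow_mul_rpow ha hb u).mul_continuousOn_of_subset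
      (hf.comp (by fun_prop) ?_) (measurableSet_triangle u)
      ((isCompact_Icc (a := 0) (b := u)).prod (isCompact_Icc (a := 0) (b := u))) ?_
    · exact fun p hp => ⟨sub_nonneg.2 hp.2.2, sub_le_self _ hp.2.1⟩
    · exact fun p ⟨h0, h12, h2⟩ =>
        ⟨⟨h0.le, (h12.trans_le h2).le⟩, ⟨(h0.trans h12).le, h2⟩⟩
  calc LSint (LSint f b) a u
      = a * b * ∫ y in Ioc 0 u, ∫ z in Ioc y u,
          y ^ (a - 1) * ((z - y) ^ (b - 1) * f (u - z)) := by
        rw [LSint, intervalIntegral.integral_of_le hu, mul_assoc,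
          ← MeasureTheory.integral_const_mul b]
        congr 1
        refine setIntegral_congr_fun measurableSet_Ioc fun y hy => ?_
        rw [LSint_sub, intervalIntegral.integral_of_le hy.2, MeasureTheory.integral_const_mul]
        ring
    _ = a * b * ∫ z in Ioc 0 u, ∫ y in Ioo 0 z,
          y ^ (a - 1) * ((z - y) ^ (b - 1) * f (u - z)) := by
        rw [integral_Ioc_integral_Ioc_eq_integral_Ioc_integral_Ioo _ hint]
    _ = a * b * ∫ z in Ioc 0 u,
          Real.Gamma a * Real.Gamma b / Real.Gamma (a + b) * (f (u - z) * z ^ (a + b - 1)) := by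
        refine congrArg _ (setIntegral_congr_fun measurableSet_Ioc fun z hz => ?_)
        simp_rw [← mul_assoc]
        rw [MeasureTheory.integral_mul_const, ← integral_Ioc_eq_integral_Ioo,
          ← intervalIntegral.integral_of_le hz.1.le, integral_rpow_mul_sub_rpow ha hb hz.1]
        ring
    _ = _ := by
        rw [MeasureTheory.integral_const_mul, LSint, intervalIntegral.integral_of_le hu,
          add_comm 1 a, add_comm 1 b, Real.Gamma_add_one ha.ne', Real.Gamma_add_one hb.ne',
          add_right_comm, Real.Gamma_add_one (by positivity)]
        have : Real.Gamma (a + b) ≠ 0 := (Real.Gamma_pos_of_pos (by positivity)).ne'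
        field_simp

theorem Wfun_of_two_le (W : ℝ → ℝ) (α : ℝ) {k : ℕ} (hk : 2 ≤ k) :
    Wfun W α k = fun u => k * LSint W (α * ((k : ℝ) - 1)) u := by
  rw [Wfun]
  omega

theorem stmt9_general (α : ℝ) (hα : 0 < α) (W : ℝ → ℝ)
    (hWcont : ContinuousOn W (Set.Ici 0))
    (k : ℕ) (hk : 1 ≤ k) :
    ∀ u : ℝ, 0 ≤ u →
      LSint W (α * k) u
        + Real.Gamma (1 + α * k) /
            (Real.Gamma (1 + α) * Real.Gamma (1 + α * ((k : ℝ) - 1))) *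
          LSint (Wfun W α k) α u
        = Wfun W α (k + 1) u := by
  intro u hu
  obtain ⟨k, rfl⟩ := Nat.exists_eq_add_of_le' hk
  have hΓ : ∀ {s : ℝ}, 0 ≤ s → Real.Gamma (1 + s) ≠ 0 :=
    fun hs => (Real.Gamma_pos_of_pos (by linarith)).ne'
  rw [Wfun_of_two_le W α (by omega : 2 ≤ k + 1 + 1)]
  rcases Nat.eq_zero_or_pos k with rfl | hk_pos
  · norm_num [Wfun, div_self (hΓ hα.le)]
    ring
  have hαk : 0 < α * k := by positivity
  rw [Wfun_of_two_le W α (by omega : 2 ≤ k + 1), LSint_const_mul]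
  push_cast
  simp only [add_sub_cancel_right]
  rw [LSint_LSint hα hαk hu (hWcont.mono Icc_subset_Ici_self),
    show 1 + α + α * k = 1 + α * (k + 1) by ring, show α + α * k = α * (k + 1) by ring]
  field_simp [hΓ hα.le, hΓ hαk.le, hΓ (by positivity : 0 ≤ α * (k + 1))]
  ring

/-- for `W : [0,∞) → ℝ` continuous with `W(0) = 0` and `α > 0`, for every
integer `k ≥ 1` and `u ≥ 0`:
`∫_0^u W(u-y) d(y^{αk}) + (Γ(1+αk)/(Γ(1+α)Γ(1+α(k-1)))) ∫_0^u W_k(u-y) d(y^α) = W_{k+1}(u)`. -/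
theorem stmt9 (α : ℝ) (hα : 0 < α) (W : ℝ → ℝ)
    (hWcont : ContinuousOn W (Set.Ici 0)) (hW0 : W 0 = 0)
    (k : ℕ) (hk : 1 ≤ k) :
    ∀ u : ℝ, 0 ≤ u →
      LSint W (α * k) u
        + Real.Gamma (1 + α * k) /
            (Real.Gamma (1 + α) * Real.Gamma (1 + α * ((k : ℝ) - 1))) *
          LSint (Wfun W α k) α u
        = Wfun W α (k + 1) u :=
  stmt9_general α hα W hWcont k hk
end

section
/- Let b be positive, nondecreasing, right-continuous, and regularly varying at ∞ of index α > 0. Then the Laplace–Stieltjes transform ψ(s) = ∫_{[0,∞)} e^{−sy} db(y) satisfies lim_{t→∞} ψ(u/t)/b(t) = Γ(1+α) u^{−α} for every u > 0, and the convergence is uniform in u on compact subsets [c,d] ⊂ (0,∞). -/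
/-!
Tonelli turns the Laplace–Stieltjes transform into an ordinary Laplace transform,
`ψ s = ∫₀^∞ s e^{-s x} b x dx`, and the substitution `x = z t` gives
`ψ (u / t) / b t = u ∫₀^∞ (b (z t) / b t) e^{-u z} dz`, to be compared with
`Γ(1 + α) u^{-α} = u ∫₀^∞ z^α e^{-u z} dz`. Regular variation gives `b (z t) / b t → z^α`
pointwise, and iterating the eventual doubling bound `b (2 t) ≤ 2^{α+1} b t` gives the
Potter-type domination `b (z t) / b t ≤ 2^{α+1} (1 + z^{α+1})`, so dominated convergence applies.
For `u ∈ [c, d]` the error is at most `d ∫₀^∞ |b (z t) / b t - z^α| e^{-c z} dz`, a bound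
independent of `u`, whence the uniformity.
-/

open MeasureTheory Set Filter Topology Real

lemma integral_Ioi_mul_exp_neg_mul {s : ℝ} (hs : 0 < s) (y : ℝ) :
    ∫ x in Ioi y, s * exp (-s * x) = exp (-s * y) := by
  rw [integral_const_mul, integral_exp_mul_Ioi (neg_neg_iff_pos.2 hs)]
  field_simp

lemma lintegral_ofReal_exp_neg_mul_eq_lintegral_mul_measure_Iic (μ : Measure ℝ) [SigmaFinite μ]
    {s : ℝ} (hs : 0 < s) :
    ∫⁻ y, ENNReal.ofReal (exp (-s * y)) ∂μ
      = ∫⁻ x, ENNReal.ofReal (s * exp (-s * x)) * μ (Iic x) := by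
  set g : ℝ → ENNReal := fun x => ENNReal.ofReal (s * exp (-s * x))
  have hg : Measurable g := by fun_prop
  have htail (y : ℝ) : ENNReal.ofReal (exp (-s * y)) = ∫⁻ x, (Ici y).indicator g x := by
    rw [lintegral_indicator measurableSet_Ici, ← restrict_Ioi_eq_restrict_Ici,
      ← integral_Ioi_mul_exp_neg_mul hs y, ofReal_integral_eq_lintegral_ofReal]
    · exact (exp_neg_integrableOn_Ioi y hs).const_mul s
    · exact Eventually.of_forall fun x => by positivity
  calc ∫⁻ y, ENNReal.ofReal (exp (-s * y)) ∂μ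
      = ∫⁻ y, (∫⁻ x, (Ici y).indicator g x) ∂μ := by simp_rw [htail]
    _ = ∫⁻ x, ∫⁻ y, (Iic x).indicator (fun _ => g x) y ∂μ := by
        rw [lintegral_lintegral_swap]
        · simp only [indicator_apply, mem_Ici, mem_Iic]
        · exact (Measurable.ite (measurableSet_le measurable_fst measurable_snd)
            (hg.comp measurable_snd) measurable_const).aemeasurable
    _ = ∫⁻ x, g x * μ (Iic x) := by
        simp_rw [lintegral_indicator_const measurableSet_Iic]

lemma integral_Ici_exp_neg_mul_eq_integral_mul_measure_Iic {μ : Measure ℝ}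
    (hsupp : μ (Iio 0) = 0) (hfin : ∀ x, μ (Iic x) ≠ ⊤) {s : ℝ} (hs : 0 < s) :
    ∫ y in Ici 0, exp (-s * y) ∂μ = ∫ x in Ioi 0, s * exp (-s * x) * (μ (Iic x)).toReal := by
  have : IsLocallyFiniteMeasure μ :=
    ⟨fun x => ⟨Iic (x + 1), Iic_mem_nhds (lt_add_one x), (hfin _).lt_top⟩⟩
  have hμ : μ.restrict (Ici 0) = μ := by
    refine Measure.restrict_eq_self_of_ae_mem (ae_iff.2 ?_)
    simp only [mem_Ici, not_le]
    exact hsupp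
  have hIic {x : ℝ} (hx : x < 0) : μ (Iic x) = 0 :=
    measure_mono_null (Iic_subset_Iio.2 hx) hsupp
  -- Both sides are `toReal` of the same lintegral, so no integrability is needed.
  rw [hμ, integral_eq_lintegral_of_nonneg_ae (Eventually.of_forall fun _ => (exp_pos _).le)
      (by fun_prop), integral_eq_lintegral_of_nonneg_ae
      (Eventually.of_forall fun _ => by positivity) ?_,
    lintegral_ofReal_exp_neg_mul_eq_lintegral_mul_measure_Iic μ hs,
    restrict_Ioi_eq_restrict_Ici, ← setLIntegral_eq_of_support_subset (s := Ici 0)]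
  · congr 1
    refine setLIntegral_congr_fun measurableSet_Ici fun x _ => ?_
    rw [ENNReal.ofReal_mul' (q := (μ (Iic x)).toReal) ENNReal.toReal_nonneg,
      ENNReal.ofReal_toReal (hfin x)]
  · intro x hx
    by_contra hx0
    exact hx (by simp [hIic (not_le.1 hx0)])
  · have : Measurable fun x => (μ (Iic x)).toReal := Monotone.measurable fun x y hxy =>
      ENNReal.toReal_mono (hfin y) (measure_mono (Iic_subset_Iic.2 hxy))
    fun_prop

lemma integral_Ioi_mul_exp_neg_mul_comp_mul_right (F : ℝ → ℝ) {t : ℝ} (ht : 0 < t) (u : ℝ) :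
    ∫ x in Ioi 0, u / t * exp (-(u / t) * x) * F x
      = u * ∫ z in Ioi 0, F (z * t) * exp (-u * z) := by
  have hsub := integral_comp_mul_right_Ioi (fun x => u / t * exp (-(u / t) * x) * F x) 0 ht
  rw [zero_mul, smul_eq_mul, eq_inv_mul_iff_mul_eq₀ ht.ne', ← integral_const_mul] at hsub
  rw [← hsub, ← integral_const_mul]
  refine setIntegral_congr_fun measurableSet_Ioi fun z _ => ?_
  field_simp

lemma mul_integral_rpow_mul_exp_neg_mul_Ioi {α u : ℝ} (hα : -1 < α) (hu : 0 < u) :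
    u * ∫ z in Ioi 0, z ^ α * exp (-u * z) = Gamma (1 + α) * u ^ (-α) := by
  have h := integral_rpow_mul_exp_neg_mul_Ioi (a := α + 1) (by linarith) hu
  simp only [add_sub_cancel_right, ← neg_mul] at h
  rw [h, add_comm α, one_div, inv_rpow hu.le, ← rpow_neg hu.le, neg_add, rpow_add hu, rpow_neg_one]
  field_simp

lemma integrableOn_one_add_rpow_mul_exp_neg_mul {p c : ℝ} (hp : -1 < p) (hc : 0 < c) :
    IntegrableOn (fun z => (1 + z ^ p) * exp (-c * z)) (Ioi 0) := by
  have h := integrableOn_rpow_mul_exp_neg_mul_rpow (p := 1) hp one_pos hc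
  simp only [rpow_one] at h
  exact ((exp_neg_integrableOn_Ioi 0 hc).add h).congr_fun (fun z _ => by simp [add_mul])
    measurableSet_Ioi

lemma integrableOn_mul_exp_neg_mul_of_abs_le {f : ℝ → ℝ} {A p c : ℝ} (hp : -1 < p) (hc : 0 < c)
    (hf : AEStronglyMeasurable f (volume.restrict (Ioi 0)))
    (hle : ∀ z > 0, |f z| ≤ A * (1 + z ^ p)) :
    IntegrableOn (fun z => f z * exp (-c * z)) (Ioi 0) := by
  refine ((integrableOn_one_add_rpow_mul_exp_neg_mul hp hc).const_mul A).mono'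
    (hf.mul (by fun_prop)) ((ae_restrict_iff' measurableSet_Ioi).2 ?_)
  filter_upwards with z hz
  rw [norm_mul, norm_of_nonneg (exp_pos _).le, ← mul_assoc]
  exact mul_le_mul_of_nonneg_right (hle z hz) (exp_pos _).le

lemma tendsto_integral_mul_exp_neg_mul_of_abs_le {ι : Type*} {l : Filter ι}
    [l.IsCountablyGenerated] {H : ι → ℝ → ℝ} {h : ℝ → ℝ} {A p c : ℝ} (hp : -1 < p) (hc : 0 < c)
    (hH : ∀ i, AEStronglyMeasurable (H i) (volume.restrict (Ioi 0)))
    (hle : ∀ᶠ i in l, ∀ z > 0, |H i z| ≤ A * (1 + z ^ p))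
    (hlim : ∀ z > 0, Tendsto (fun i => H i z) l (𝓝 (h z))) :
    Tendsto (fun i => ∫ z in Ioi 0, H i z * exp (-c * z)) l
      (𝓝 (∫ z in Ioi 0, h z * exp (-c * z))) := by
  refine tendsto_integral_filter_of_dominated_convergence _
    (Eventually.of_forall fun i => (hH i).mul (by fun_prop)) ?_
    ((integrableOn_one_add_rpow_mul_exp_neg_mul hp hc).const_mul A) ?_
  · filter_upwards [hle] with i hi
    refine (ae_restrict_iff' measurableSet_Ioi).2 (Eventually.of_forall fun z hz => ?_)
    rw [norm_mul, norm_of_nonneg (exp_pos _).le, ← mul_assoc]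
    exact mul_le_mul_of_nonneg_right (hi z hz) (exp_pos _).le
  · exact (ae_restrict_iff' measurableSet_Ioi).2 (Eventually.of_forall fun z hz =>
      (hlim z hz).mul_const _)

lemma abs_mul_integral_mul_exp_neg_mul_le {f : ℝ → ℝ} {c d u : ℝ} (hc : 0 < c) (hu : u ∈ Icc c d)
    (hf : IntegrableOn (fun z => |f z| * exp (-c * z)) (Ioi 0)) :
    |u * ∫ z in Ioi 0, f z * exp (-u * z)| ≤ d * ∫ z in Ioi 0, |f z| * exp (-c * z) := by
  have hu0 : 0 < u := hc.trans_le hu.1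
  rw [abs_mul, abs_of_pos hu0]
  refine mul_le_mul hu.2 ?_ (abs_nonneg _) (hu0.le.trans hu.2)
  refine abs_integral_le_integral_abs.trans (integral_mono_of_nonneg
    (Eventually.of_forall fun _ => abs_nonneg _) hf ((ae_restrict_iff' measurableSet_Ioi).2
      (Eventually.of_forall fun z hz => ?_)))
  simp only [abs_mul, abs_of_pos (exp_pos _)]
  gcongr
  exacts [hz.le, hu.1]

lemma Monotone.le_rpow_mul_of_doubling {b : ℝ → ℝ} {p T : ℝ} (hb : Monotone b) (hT : 0 ≤ T)
    (hp : 0 ≤ p) (hdouble : ∀ t ≥ T, b (2 * t) ≤ 2 ^ p * b t) (hb0 : ∀ t ≥ T, 0 ≤ b t)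
    {t x : ℝ} (ht : T ≤ t) (hx : 1 ≤ x) :
    b (x * t) ≤ 2 ^ p * x ^ p * b t := by
  have ht0 : 0 ≤ t := hT.trans ht
  have hiter (n : ℕ) : b (2 ^ n * t) ≤ (2 ^ p) ^ n * b t := by
    induction n with
    | zero => simp
    | succ n ih =>
      have hTn : T ≤ 2 ^ n * t := ht.trans (le_mul_of_one_le_left ht0 (one_le_pow₀ one_le_two))
      calc b (2 ^ (n + 1) * t) = b (2 * (2 ^ n * t)) := by ring_nf
        _ ≤ 2 ^ p * b (2 ^ n * t) := hdouble _ hTn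
        _ ≤ 2 ^ p * ((2 ^ p) ^ n * b t) := by gcongr
        _ = (2 ^ p) ^ (n + 1) * b t := by ring
  obtain ⟨n, hn, hxn⟩ := exists_nat_pow_near hx one_lt_two
  calc b (x * t) ≤ b (2 ^ (n + 1) * t) := hb (mul_le_mul_of_nonneg_right hxn.le ht0)
    _ ≤ (2 ^ p) ^ (n + 1) * b t := hiter _
    _ = 2 ^ p * ((2 : ℝ) ^ n) ^ p * b t := by
        rw [pow_succ, rpow_pow_comm zero_le_two]
        ring
    _ ≤ 2 ^ p * x ^ p * b t := by
        gcongr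
        exact hb0 t ht

lemma eventually_div_le_of_tendsto_div_two_mul {b : ℝ → ℝ} {α p : ℝ} (hb : Monotone b)
    (hpos : ∀ t ≥ 0, 0 < b t) (hαp : α < p) (hp : 0 ≤ p)
    (h2 : Tendsto (fun t => b (2 * t) / b t) atTop (𝓝 (2 ^ α))) :
    ∀ᶠ t in atTop, ∀ x > 0, b (x * t) / b t ≤ 2 ^ p * (1 + x ^ p) := by
  obtain ⟨T₀, hT₀⟩ := eventually_atTop.1
    (h2.eventually_le_const (rpow_lt_rpow_of_exponent_lt one_lt_two hαp))
  set T := max T₀ 0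
  have hdouble : ∀ t ≥ T, b (2 * t) ≤ 2 ^ p * b t := fun t ht =>
    (div_le_iff₀ (hpos t (le_of_max_le_right ht))).1 (hT₀ t (le_of_max_le_left ht))
  filter_upwards [eventually_ge_atTop T] with t ht x hx
  have ht0 : 0 ≤ t := le_of_max_le_right ht
  rw [div_le_iff₀ (hpos t ht0)]
  rcases le_total x 1 with hx1 | hx1
  · calc b (x * t) ≤ b t := hb (mul_le_of_le_one_left ht0 hx1)
      _ ≤ 2 ^ p * (1 + x ^ p) * b t := by
        refine le_mul_of_one_le_left (hpos t ht0).le (one_le_mul_of_one_le_of_one_le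
          (one_le_rpow one_le_two hp) (le_add_of_nonneg_right (by positivity)))
  · calc b (x * t) ≤ 2 ^ p * x ^ p * b t :=
          hb.le_rpow_mul_of_doubling (le_max_right _ _) hp hdouble
            (fun s hs => (hpos s (le_of_max_le_right hs)).le) ht hx1
      _ ≤ 2 ^ p * (1 + x ^ p) * b t := by
        gcongr
        · exact (hpos t ht0).le
        · linarith

lemma rpow_le_one_add_rpow {z a p : ℝ} (hz : 0 ≤ z) (ha : 0 ≤ a) (hap : a ≤ p) :
    z ^ a ≤ 1 + z ^ p := by
  rcases le_total z 1 with hz1 | hz1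
  · linarith [rpow_le_one hz hz1 ha, rpow_nonneg hz p]
  · linarith [rpow_le_rpow_of_exponent_le hz1 hap]

lemma tendstoUniformlyOn_of_eventually_abs_sub_le {ι β : Type*} {l : Filter ι} {F : ι → β → ℝ}
    {f : β → ℝ} {s : Set β} {e : ι → ℝ} (he : Tendsto e l (𝓝 0))
    (hle : ∀ᶠ i in l, ∀ u ∈ s, |F i u - f u| ≤ e i) : TendstoUniformlyOn F f l s := by
  refine Metric.tendstoUniformlyOn_iff.2 fun ε hε => ?_
  filter_upwards [hle, he.eventually (gt_mem_nhds hε)] with i hi hei u hu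
  rw [dist_comm, Real.dist_eq]
  exact (hi u hu).trans_lt hei

section RegularVariation

variable {b : ℝ → ℝ} {α : ℝ}

lemma eventually_abs_div_sub_rpow_le (hb : Monotone b) (hpos : ∀ t ≥ 0, 0 < b t) (hα : 0 ≤ α)
    (h2 : Tendsto (fun t => b (2 * t) / b t) atTop (𝓝 (2 ^ α))) :
    ∀ᶠ t in atTop, ∀ z > 0,
      |b (z * t) / b t - z ^ α| ≤ (2 ^ (α + 1) + 1) * (1 + z ^ (α + 1)) := by
  filter_upwards [eventually_div_le_of_tendsto_div_two_mul hb hpos (lt_add_one α) (by linarith) h2,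
    eventually_ge_atTop 0] with t ht ht0 z hz
  have h0 : 0 ≤ b (z * t) / b t := div_nonneg (hpos _ (by positivity)).le (hpos t ht0).le
  rw [abs_sub_le_iff]
  constructor <;> nlinarith [ht z hz, rpow_le_one_add_rpow hz.le hα (le_add_of_nonneg_right
    zero_le_one), rpow_nonneg hz.le α, rpow_nonneg hz.le (α + 1)]

lemma tendsto_integral_abs_div_sub_rpow_mul_exp_neg_mul (hb : Monotone b)
    (hpos : ∀ t ≥ 0, 0 < b t) (hα : 0 ≤ α)
    (hreg : ∀ lam > 0, Tendsto (fun t => b (lam * t) / b t) atTop (𝓝 (lam ^ α)))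
    {c : ℝ} (hc : 0 < c) :
    Tendsto (fun t => ∫ z in Ioi 0, |b (z * t) / b t - z ^ α| * exp (-c * z)) atTop (𝓝 0) := by
  have := hb.measurable
  simpa using tendsto_integral_mul_exp_neg_mul_of_abs_le (h := 0) (p := α + 1) (by linarith) hc
    (fun t => (by fun_prop : Measurable _).aestronglyMeasurable)
    (by simpa only [abs_abs] using eventually_abs_div_sub_rpow_le hb hpos hα (hreg 2 two_pos))
    fun z hz => by simpa using ((hreg z hz).sub_const (z ^ α)).abs

theorem tendstoUniformlyOn_mul_integral_mul_exp_neg_mul_div (hb : Monotone b)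
    (hpos : ∀ t ≥ 0, 0 < b t) (hα : 0 ≤ α)
    (hreg : ∀ lam > 0, Tendsto (fun t => b (lam * t) / b t) atTop (𝓝 (lam ^ α)))
    {c d : ℝ} (hc : 0 < c) :
    TendstoUniformlyOn (fun t u => u * (∫ z in Ioi 0, b (z * t) * exp (-u * z)) / b t)
      (fun u => Gamma (1 + α) * u ^ (-α)) atTop (Icc c d) := by
  have hp : -1 < α + 1 := by linarith
  have hbm := hb.measurable
  refine tendstoUniformlyOn_of_eventually_abs_sub_le (by simpa only [mul_zero] using
    (tendsto_integral_abs_div_sub_rpow_mul_exp_neg_mul hb hpos hα hreg hc).const_mul d) ?_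
  filter_upwards [eventually_div_le_of_tendsto_div_two_mul hb hpos (lt_add_one α) (by linarith)
      (hreg 2 two_pos), eventually_abs_div_sub_rpow_le hb hpos hα (hreg 2 two_pos),
    eventually_ge_atTop 0] with t hratio herr ht0 u hu
  have hu0 : 0 < u := hc.trans_le hu.1
  have hint_b : IntegrableOn (fun z => b (z * t) / b t * exp (-u * z)) (Ioi 0) :=
    integrableOn_mul_exp_neg_mul_of_abs_le hp hu0
      (by fun_prop : Measurable _).aestronglyMeasurable fun z hz =>
      (abs_of_nonneg (div_nonneg (hpos _ (by positivity)).le (hpos t ht0).le)).trans_le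
      (hratio z hz)
  have hint_rpow : IntegrableOn (fun z => z ^ α * exp (-u * z)) (Ioi 0) :=
    integrableOn_mul_exp_neg_mul_of_abs_le (A := 1) (p := α) (by linarith) hu0 (by fun_prop)
      fun z hz => by
        rw [abs_of_nonneg (rpow_nonneg hz.le α)]
        linarith
  calc |u * (∫ z in Ioi 0, b (z * t) * exp (-u * z)) / b t - Gamma (1 + α) * u ^ (-α)|
      = |u * ∫ z in Ioi 0, (b (z * t) / b t - z ^ α) * exp (-u * z)| := by
        simp_rw [sub_mul]
        rw [integral_sub hint_b hint_rpow, mul_sub, mul_integral_rpow_mul_exp_neg_mul_Ioi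
          (by linarith) hu0, mul_div_assoc, ← integral_div]
        simp_rw [mul_div_right_comm]
    _ ≤ d * ∫ z in Ioi 0, |b (z * t) / b t - z ^ α| * exp (-c * z) :=
        abs_mul_integral_mul_exp_neg_mul_le hc hu (integrableOn_mul_exp_neg_mul_of_abs_le hp hc
          (by fun_prop : Measurable _).aestronglyMeasurable (by simpa only [abs_abs] using herr))

end RegularVariation

theorem stmt15_general (α : ℝ) (hα : 0 < α) (b : ℝ → ℝ) (μ : MeasureTheory.Measure ℝ)
    (hsupp : μ (Set.Iio 0) = 0)
    (hrep : ∀ t : ℝ, b t = (μ (Set.Iic t)).toReal)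
    (hpos : ∀ t : ℝ, 0 ≤ t → 0 < b t)
    (hreg : ∀ lam : ℝ, 0 < lam →
      Tendsto (fun t : ℝ => b (lam * t) / b t) atTop (𝓝 (lam ^ α)))
    (ψ : ℝ → ℝ) (hψ : ∀ s : ℝ, ψ s = ∫ y in Set.Ici 0, Real.exp (-s * y) ∂μ) :
    (∀ u : ℝ, 0 < u →
      Tendsto (fun t : ℝ => ψ (u / t) / b t) atTop (𝓝 (Real.Gamma (1 + α) * u ^ (-α))))
    ∧ ∀ c d : ℝ, 0 < c → c < d →
        TendstoUniformlyOn (fun t : ℝ => fun u : ℝ => ψ (u / t) / b t)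
          (fun u : ℝ => Real.Gamma (1 + α) * u ^ (-α)) atTop (Set.Icc c d) := by
  have hfin (x : ℝ) : μ (Iic x) ≠ ⊤ :=
    ne_top_of_le_ne_top (ENNReal.toReal_pos_iff.1 (hrep _ ▸ hpos _ (le_max_right x 0))).2.ne
      (measure_mono (Iic_subset_Iic.2 (le_max_left x 0)))
  have hb : Monotone b := fun x y hxy => by
    rw [hrep, hrep]
    exact ENNReal.toReal_mono (hfin y) (measure_mono (Iic_subset_Iic.2 hxy))
  have hψ_eq {t u : ℝ} (ht : 0 < t) (hu : 0 < u) :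
      ψ (u / t) = u * ∫ z in Ioi 0, b (z * t) * exp (-u * z) := by
    rw [hψ, integral_Ici_exp_neg_mul_eq_integral_mul_measure_Iic hsupp hfin (div_pos hu ht)]
    simp_rw [← hrep]
    exact integral_Ioi_mul_exp_neg_mul_comp_mul_right b ht u
  have hunif (c d : ℝ) (hc : 0 < c) : TendstoUniformlyOn (fun t u => ψ (u / t) / b t)
      (fun u => Gamma (1 + α) * u ^ (-α)) atTop (Icc c d) :=
    (tendstoUniformlyOn_mul_integral_mul_exp_neg_mul_div hb hpos hα.le hreg hc).congr <| by
      filter_upwards [eventually_gt_atTop 0] with t ht u hu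
      simp only [hψ_eq ht (hc.trans_le hu.1)]
  exact ⟨fun u hu => (hunif u u hu).tendsto_at ⟨le_rfl, le_rfl⟩, fun c d hc _ => hunif c d hc⟩

/-- let `b` be positive, nondecreasing, right-continuous and regularly
varying at `∞` of index `α > 0` (represented by `b t = μ (Iic t)` with `μ` carried by
`[0,∞)` and having finite Laplace–Stieltjes transform).  Then
`ψ(s) = ∫_{[0,∞)} e^{-sy} db(y)` satisfies `ψ(u/t)/b(t) → Γ(1+α) u^{-α}` as `t → ∞`, for
every `u > 0`, uniformly in `u` on compact subsets `[c,d] ⊂ (0,∞)`. -/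
theorem stmt15 (α : ℝ) (hα : 0 < α) (b : ℝ → ℝ) (μ : MeasureTheory.Measure ℝ)
    (hsupp : μ (Set.Iio 0) = 0) (hfin : ∀ t : ℝ, μ (Set.Iic t) < ⊤)
    (hrep : ∀ t : ℝ, b t = (μ (Set.Iic t)).toReal)
    (hpos : ∀ t : ℝ, 0 ≤ t → 0 < b t)
    (hreg : ∀ lam : ℝ, 0 < lam →
      Tendsto (fun t : ℝ => b (lam * t) / b t) atTop (𝓝 (lam ^ α)))
    (hint : ∀ s : ℝ, 0 < s →
      MeasureTheory.IntegrableOn (fun y => Real.exp (-s * y)) (Set.Ici 0) μ)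
    (ψ : ℝ → ℝ) (hψ : ∀ s : ℝ, ψ s = ∫ y in Set.Ici 0, Real.exp (-s * y) ∂μ) :
    (∀ u : ℝ, 0 < u →
      Tendsto (fun t : ℝ => ψ (u / t) / b t) atTop (𝓝 (Real.Gamma (1 + α) * u ^ (-α))))
    ∧ ∀ c d : ℝ, 0 < c → c < d →
        TendstoUniformlyOn (fun t : ℝ => fun u : ℝ => ψ (u / t) / b t)
          (fun u : ℝ => Real.Gamma (1 + α) * u ^ (-α)) atTop (Set.Icc c d) :=
  stmt15_general α hα b μ hsupp hrep hpos hreg ψ hψ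
end

section
/- Let Z : [0,∞) → [0,∞) be nondecreasing and continuous with Z(0) = 0. Then for every j ≥ 1, the j-fold Lebesgue–Stieltjes convolution Z^{*(j)}(u) = ∫_{[0,u]} Z(u−y) dZ^{*(j−1)}(y) is continuous on [0,∞), and if additionally functions c_n ↑ ∞ and nondecreasing X_n satisfy X_n(u)/c_n → Z(u) uniformly on compacts, then X_n^{*(j)}(u)/c_n^j → Z^{*(j)}(u) uniformly on compacts for each j. -/
/-!
Write `F_γ t = γ (Iic t)`. All measures live on `[0, ∞)`, so
`F_{α ∗ β} t = ∫_{[0,t]} F_α (t - y) dβ(y)`, and continuity of `F_α` passes to `F_{α ∗ β}` by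
dominated convergence. With `κ_n = c_n⁻¹ • ν_n` one has `κ_n^{∗j} = c_n^{-j} • ν_n^{∗j}`, so it
suffices to prove `F_{κ_n^{∗j}} → F_{μ^{∗j}}` pointwise: a pointwise limit of nondecreasing
functions that is continuous is a locally uniform limit (Pólya). Inductively,
`|F_{κ_n ∗ β_n} t - F_{μ ∗ β_n} t| ≤ sup_{[0,t]} |F_{κ_n} - F_μ| · F_{β_n} t`, while commuting the
convolution puts the converging `F_{β_n}` under the fixed measure `μ`, so that
`F_{μ ∗ β_n} t → F_{μ ∗ β} t` by dominated convergence.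
-/

open MeasureTheory Set Filter Topology

open scoped ENNReal

theorem tendstoLocallyUniformly_of_monotone_of_continuous {ι : Type*} {l : Filter ι}
    {F : ι → ℝ → ℝ} {g : ℝ → ℝ} (hF : ∀ i, Monotone (F i)) (hg : Continuous g)
    (h : ∀ x, Tendsto (fun i => F i x) l (𝓝 (g x))) : TendstoLocallyUniformly F g l := by
  rw [Metric.tendstoLocallyUniformly_iff]
  intro ε hε x
  obtain ⟨δ, hδ, hgδ⟩ := Metric.continuous_iff.1 hg x (ε / 4) (by positivity)
  have hg_near : ∀ y, |y - x| ≤ δ / 2 → |g y - g x| < ε / 4 := fun y hy =>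
    hgδ y (by rw [Real.dist_eq]; linarith)
  -- on `[x - δ/2, x + δ/2]` each `F i` is squeezed between its values at the two endpoints
  refine ⟨Icc (x - δ / 2) (x + δ / 2), Icc_mem_nhds (by linarith) (by linarith), ?_⟩
  filter_upwards [Metric.tendsto_nhds.1 (h (x - δ / 2)) (ε / 4) (by positivity),
    Metric.tendsto_nhds.1 (h (x + δ / 2)) (ε / 4) (by positivity)] with i hlo hhi y hy
  have hlo' := hg_near (x - δ / 2) (by rw [abs_le]; constructor <;> linarith)
  have hhi' := hg_near (x + δ / 2) (by rw [abs_le]; constructor <;> linarith)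
  have hy' := hg_near y (by rw [abs_le]; constructor <;> linarith [hy.1, hy.2])
  have hmono_lo := hF i hy.1
  have hmono_hi := hF i hy.2
  rw [Real.dist_eq, abs_lt] at hlo hhi ⊢
  rw [abs_lt] at hlo' hhi' hy'
  constructor <;> linarith

theorem mconv_eq_conv (α β : Measure ℝ) : mconv α β = α ∗ β := rfl

theorem mconv_apply_s19 (α β : Measure ℝ) [SFinite α] [SFinite β] {s : Set ℝ}
    (hs : MeasurableSet s) : mconv α β s = ∫⁻ y, α ((· + y) ⁻¹' s) ∂β := by
  rw [mconv, Measure.map_apply measurable_add hs, Measure.prod_apply_symm (measurable_add hs)]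
  rfl

theorem measurable_measure_Iic_sub (γ : Measure ℝ) (t : ℝ) :
    Measurable fun x => γ (Iic (t - x)) :=
  Antitone.measurable fun _ _ hxy => measure_mono (Iic_subset_Iic.2 (by linarith))

instance sFinite_mconvPow (μ : Measure ℝ) [SFinite μ] : ∀ j, SFinite (mconvPow μ j)
  | 0 => inferInstanceAs (SFinite (Measure.dirac 0))
  | 1 => ‹SFinite μ›
  | j + 2 => by
    have := sFinite_mconvPow μ (j + 1)
    exact inferInstanceAs (SFinite (μ ∗ mconvPow μ (j + 1)))

theorem mconvPow_succ (μ : Measure ℝ) [SFinite μ] (j : ℕ) :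
    mconvPow μ (j + 1) = mconv μ (mconvPow μ j) := by
  cases j with
  | zero => exact (Measure.conv_dirac_zero μ).symm
  | succ j => rfl

theorem mconvPow_smul (μ : Measure ℝ) [SFinite μ] (a : ℝ≥0∞) (j : ℕ) :
    mconvPow (a • μ) j = a ^ j • mconvPow μ j := by
  induction j with
  | zero => simp [mconvPow]
  | succ j ih =>
    rw [mconvPow_succ, mconvPow_succ, ih, mconv_eq_conv, mconv_eq_conv, Measure.conv_smul_left,
      Measure.conv_smul_right, smul_smul, pow_succ']

/-- `μ` is the Lebesgue–Stieltjes measure of a nondecreasing right-continuous function `F`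
vanishing on `(-∞, 0)`, normalised by `F t = μ (Iic t)`. -/
structure IsNonnegStieltjes (μ : Measure ℝ) : Prop where
  measure_Iio_zero : μ (Iio 0) = 0
  measure_Iic_lt_top (t : ℝ) : μ (Iic t) < ∞

noncomputable def distFun (μ : Measure ℝ) (t : ℝ) : ℝ := (μ (Iic t)).toReal

theorem distFun_nonneg (μ : Measure ℝ) (t : ℝ) : 0 ≤ distFun μ t := ENNReal.toReal_nonneg

namespace IsNonnegStieltjes

variable {α α' β : Measure ℝ}

theorem sFinite (h : IsNonnegStieltjes α) : SFinite α := by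
  have : IsFiniteMeasureOnCompacts α := ⟨fun K hK => by
    obtain ⟨b, hb⟩ := hK.bddAbove
    exact (measure_mono (fun x hx => hb hx : K ⊆ Iic b)).trans_lt (h.measure_Iic_lt_top b)⟩
  infer_instance

theorem ae_nonneg (h : IsNonnegStieltjes α) : ∀ᵐ y ∂α, 0 ≤ y := by
  rw [ae_iff]
  simp only [not_le]
  exact h.measure_Iio_zero

theorem measure_Iic_of_neg (h : IsNonnegStieltjes α) {t : ℝ} (ht : t < 0) : α (Iic t) = 0 :=
  measure_mono_null (Iic_subset_Iio.2 ht) h.measure_Iio_zero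

theorem ofReal_distFun (h : IsNonnegStieltjes α) (t : ℝ) :
    ENNReal.ofReal (distFun α t) = α (Iic t) :=
  ENNReal.ofReal_toReal (h.measure_Iic_lt_top t).ne

theorem monotone_distFun (h : IsNonnegStieltjes α) : Monotone (distFun α) := fun _ t hst =>
  ENNReal.toReal_mono (h.measure_Iic_lt_top t).ne (measure_mono (Iic_subset_Iic.2 hst))

theorem smul (h : IsNonnegStieltjes α) {a : ℝ≥0∞} (ha : a ≠ ∞) : IsNonnegStieltjes (a • α) where
  measure_Iio_zero := by simp [h.measure_Iio_zero]
  measure_Iic_lt_top t := ENNReal.mul_lt_top ha.lt_top (h.measure_Iic_lt_top t)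

theorem dirac_zero : IsNonnegStieltjes (Measure.dirac 0) where
  measure_Iio_zero := by simp
  measure_Iic_lt_top _ := measure_lt_top _ _

theorem mconv_Iic_eq_setLIntegral (hα : IsNonnegStieltjes α) (hβ : IsNonnegStieltjes β)
    {t T : ℝ} (htT : t ≤ T) : mconv α β (Iic t) = ∫⁻ y in Icc 0 T, α (Iic (t - y)) ∂β := by
  have := hα.sFinite
  have := hβ.sFinite
  rw [mconv_apply_s19 α β measurableSet_Iic, ← lintegral_indicator measurableSet_Icc]
  refine lintegral_congr_ae ?_
  filter_upwards [hβ.ae_nonneg] with y hy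
  by_cases hyT : y ≤ T
  · simp [indicator_of_mem (show y ∈ Icc 0 T from ⟨hy, hyT⟩)]
  · rw [indicator_of_notMem (fun hmem => hyT hmem.2), preimage_add_const_Iic]
    exact hα.measure_Iic_of_neg (by linarith)

theorem mconv_Iic_lt_top (hα : IsNonnegStieltjes α) (hβ : IsNonnegStieltjes β) (t : ℝ) :
    mconv α β (Iic t) < ∞ := by
  rw [hα.mconv_Iic_eq_setLIntegral hβ le_rfl]
  calc ∫⁻ y in Icc 0 t, α (Iic (t - y)) ∂β ≤ ∫⁻ _ in Icc 0 t, α (Iic t) ∂β :=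
        setLIntegral_mono measurable_const fun y hy =>
          measure_mono (Iic_subset_Iic.2 (by linarith [hy.1]))
    _ = α (Iic t) * β (Icc 0 t) := setLIntegral_const _ _
    _ < ∞ := ENNReal.mul_lt_top (hα.measure_Iic_lt_top t)
        ((measure_mono Icc_subset_Iic_self).trans_lt (hβ.measure_Iic_lt_top t))

theorem mconv_Iio_zero (hα : IsNonnegStieltjes α) (hβ : IsNonnegStieltjes β) :
    mconv α β (Iio 0) = 0 := by
  have := hα.sFinite
  have := hβ.sFinite
  rw [mconv_apply_s19 α β measurableSet_Iio]
  refine (lintegral_congr_ae ?_).trans lintegral_zero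
  filter_upwards [hβ.ae_nonneg] with y hy
  rw [preimage_add_const_Iio]
  exact measure_mono_null (Iio_subset_Iio (by linarith)) hα.measure_Iio_zero

protected theorem mconv (hα : IsNonnegStieltjes α) (hβ : IsNonnegStieltjes β) :
    IsNonnegStieltjes (_root_.mconv α β) :=
  ⟨hα.mconv_Iio_zero hβ, hα.mconv_Iic_lt_top hβ⟩

protected theorem mconvPow (h : IsNonnegStieltjes α) (j : ℕ) :
    IsNonnegStieltjes (_root_.mconvPow α j) := by
  have := h.sFinite
  induction j with
  | zero => exact dirac_zero
  | succ j ih => rw [mconvPow_succ]; exact h.mconv ih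

theorem distFun_mconv_le_add (hα' : IsNonnegStieltjes α') (hα : IsNonnegStieltjes α)
    (hβ : IsNonnegStieltjes β) {t ε : ℝ} (hε : 0 ≤ ε)
    (h : ∀ s ∈ Icc 0 t, distFun α' s ≤ distFun α s + ε) :
    distFun (mconv α' β) t ≤ distFun (mconv α β) t + ε * distFun β t := by
  have hβt := distFun_nonneg β t
  refine ENNReal.toReal_le_of_le_ofReal (add_nonneg (distFun_nonneg _ _) (by positivity)) ?_
  rw [ENNReal.ofReal_add (distFun_nonneg _ _) (by positivity),
    ENNReal.ofReal_mul hε, (hα.mconv hβ).ofReal_distFun, hβ.ofReal_distFun,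
    hα'.mconv_Iic_eq_setLIntegral hβ le_rfl, hα.mconv_Iic_eq_setLIntegral hβ le_rfl]
  calc ∫⁻ y in Icc 0 t, α' (Iic (t - y)) ∂β
      ≤ ∫⁻ y in Icc 0 t, (α (Iic (t - y)) + ENNReal.ofReal ε) ∂β := by
        refine setLIntegral_mono' measurableSet_Icc fun y hy => ?_
        rw [← hα'.ofReal_distFun, ← hα.ofReal_distFun,
          ← ENNReal.ofReal_add (distFun_nonneg _ _) hε]
        exact ENNReal.ofReal_le_ofReal (h _ ⟨by linarith [hy.2], by linarith [hy.1]⟩)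
    _ = ∫⁻ y in Icc 0 t, α (Iic (t - y)) ∂β + ENNReal.ofReal ε * β (Icc 0 t) := by
        rw [lintegral_add_right _ measurable_const, setLIntegral_const]
    _ ≤ _ := by gcongr; exact Icc_subset_Iic_self

theorem abs_distFun_mconv_sub_le (hα' : IsNonnegStieltjes α') (hα : IsNonnegStieltjes α)
    (hβ : IsNonnegStieltjes β) {t ε : ℝ} (hε : 0 ≤ ε)
    (h : ∀ s ∈ Icc 0 t, |distFun α' s - distFun α s| ≤ ε) :
    |distFun (mconv α' β) t - distFun (mconv α β) t| ≤ ε * distFun β t := by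
  refine abs_sub_le_iff.2 ⟨?_, ?_⟩
  · have := hα'.distFun_mconv_le_add hα hβ hε fun s hs => by
      linarith [le_abs_self (distFun α' s - distFun α s), h s hs]
    linarith
  · have := hα.distFun_mconv_le_add hα' hβ hε fun s hs => by
      linarith [neg_abs_le (distFun α' s - distFun α s), h s hs]
    linarith

theorem continuous_distFun (h : IsNonnegStieltjes α) (h0 : distFun α 0 = 0)
    (hc : ContinuousOn (distFun α) (Ici 0)) : Continuous (distFun α) := by
  have hneg : EqOn 0 (distFun α) (Iic 0) := fun s hs =>
    (le_antisymm ((h.monotone_distFun hs).trans h0.le) (distFun_nonneg α s)).symm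
  rw [← continuousOn_univ, ← Iic_union_Ici]
  exact (continuousOn_const.congr hneg.symm).union_of_isClosed hc isClosed_Iic isClosed_Ici

theorem continuous_measure_Iic (h : IsNonnegStieltjes α) (hc : Continuous (distFun α)) :
    Continuous fun s => α (Iic s) :=
  (ENNReal.continuous_ofReal.comp hc).congr h.ofReal_distFun

theorem continuous_distFun_mconv (hα : IsNonnegStieltjes α) (hβ : IsNonnegStieltjes β)
    (hc : Continuous (distFun α)) : Continuous (distFun (mconv α β)) := by
  refine continuous_iff_continuousAt.2 fun t₀ => ?_
  refine ContinuousAt.comp (f := fun t => mconv α β (Iic t))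
    (ENNReal.continuousAt_toReal ((hα.mconv hβ).measure_Iic_lt_top t₀).ne) ?_
  set T := t₀ + 1
  have heq : (fun t => ∫⁻ y in Icc 0 T, α (Iic (t - y)) ∂β) =ᶠ[𝓝 t₀]
      fun t => mconv α β (Iic t) :=
    (eventually_le_nhds (by linarith)).mono fun t ht =>
      (hα.mconv_Iic_eq_setLIntegral hβ ht).symm
  refine ContinuousAt.congr ?_ heq
  refine tendsto_lintegral_filter_of_dominated_convergence (fun _ => α (Iic T))
    (.of_forall fun t => measurable_measure_Iic_sub α t) ?_ ?_
    (ae_of_all _ fun y =>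
      ((hα.continuous_measure_Iic hc).comp (continuous_sub_right y)).continuousAt)
  · filter_upwards [eventually_le_nhds (show t₀ < T by linarith)] with t ht
    exact ae_restrict_of_forall_mem measurableSet_Icc fun y hy =>
      measure_mono (Iic_subset_Iic.2 (by linarith [hy.1]))
  · rw [setLIntegral_const]
    exact ENNReal.mul_ne_top (hα.measure_Iic_lt_top T).ne
      ((measure_mono Icc_subset_Iic_self).trans_lt (hβ.measure_Iic_lt_top T)).ne

theorem continuous_distFun_mconvPow (h : IsNonnegStieltjes α) (hc : Continuous (distFun α))
    {j : ℕ} (hj : 1 ≤ j) : Continuous (distFun (mconvPow α j)) := by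
  have := h.sFinite
  obtain ⟨i, rfl⟩ := Nat.exists_eq_add_of_le' hj
  rw [mconvPow_succ]
  exact h.continuous_distFun_mconv (h.mconvPow i) hc

variable {ι : Type*} {l : Filter ι} {αs βs : ι → Measure ℝ}

theorem tendsto_distFun_of_tendstoLocallyUniformlyOn
    (hα : IsNonnegStieltjes α) (hαs : ∀ i, IsNonnegStieltjes (αs i))
    (h : TendstoLocallyUniformlyOn (fun i => distFun (αs i)) (distFun α) l (Ici 0)) (s : ℝ) :
    Tendsto (fun i => distFun (αs i) s) l (𝓝 (distFun α s)) := by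
  rcases lt_or_ge s 0 with hs | hs
  · simp only [distFun, (hαs _).measure_Iic_of_neg hs, hα.measure_Iic_of_neg hs]
    exact tendsto_const_nhds
  · exact h.tendsto_at hs

theorem tendsto_measure_Iic (hβ : IsNonnegStieltjes β)
    (hβs : ∀ i, IsNonnegStieltjes (βs i))
    (hlim : ∀ s, Tendsto (fun i => distFun (βs i) s) l (𝓝 (distFun β s))) (s : ℝ) :
    Tendsto (fun i => βs i (Iic s)) l (𝓝 (β (Iic s))) := by
  simpa only [fun i => (hβs i).ofReal_distFun, hβ.ofReal_distFun] using
    ENNReal.tendsto_ofReal (hlim s)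

theorem tendsto_distFun_mconv_right [l.IsCountablyGenerated]
    (hα : IsNonnegStieltjes α) (hβ : IsNonnegStieltjes β) (hβs : ∀ i, IsNonnegStieltjes (βs i))
    (hlim : ∀ s, Tendsto (fun i => distFun (βs i) s) l (𝓝 (distFun β s))) (t : ℝ) :
    Tendsto (fun i => distFun (mconv α (βs i)) t) l (𝓝 (distFun (mconv α β) t)) := by
  have hcomm : ∀ γ, IsNonnegStieltjes γ →
      mconv α γ (Iic t) = ∫⁻ x in Icc 0 t, γ (Iic (t - x)) ∂α := fun γ hγ => by
    have := hα.sFinite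
    have := hγ.sFinite
    rw [mconv_eq_conv, Measure.conv_comm, ← mconv_eq_conv, hγ.mconv_Iic_eq_setLIntegral hα le_rfl]
  refine (ENNReal.tendsto_toReal ((hα.mconv hβ).measure_Iic_lt_top t).ne).comp ?_
  simp only [hcomm _ (hβs _), hcomm β hβ]
  set C := distFun β t + 1
  refine tendsto_lintegral_filter_of_dominated_convergence (fun _ => ENNReal.ofReal C)
    (.of_forall fun i => measurable_measure_Iic_sub (βs i) t) ?_ ?_
    (ae_of_all _ fun x => hβ.tendsto_measure_Iic hβs hlim (t - x))
  · filter_upwards [(hlim t).eventually_lt_const (lt_add_one _)] with i hi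
    refine ae_restrict_of_forall_mem measurableSet_Icc fun x hx => ?_
    calc βs i (Iic (t - x))
        ≤ βs i (Iic t) := measure_mono (Iic_subset_Iic.2 (by linarith [hx.1]))
      _ = ENNReal.ofReal (distFun (βs i) t) := ((hβs i).ofReal_distFun t).symm
      _ ≤ ENNReal.ofReal C := ENNReal.ofReal_le_ofReal hi.le
  · rw [setLIntegral_const]
    exact ENNReal.mul_ne_top ENNReal.ofReal_ne_top
      ((measure_mono Icc_subset_Iic_self).trans_lt (hα.measure_Iic_lt_top t)).ne

theorem tendsto_distFun_mconv [l.IsCountablyGenerated]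
    (hα : IsNonnegStieltjes α) (hβ : IsNonnegStieltjes β)
    (hαs : ∀ i, IsNonnegStieltjes (αs i)) (hβs : ∀ i, IsNonnegStieltjes (βs i))
    (hc : Continuous (distFun α))
    (hαlim : ∀ s, Tendsto (fun i => distFun (αs i) s) l (𝓝 (distFun α s)))
    (hβlim : ∀ s, Tendsto (fun i => distFun (βs i) s) l (𝓝 (distFun β s))) (t : ℝ) :
    Tendsto (fun i => distFun (mconv (αs i) (βs i)) t) l (𝓝 (distFun (mconv α β) t)) := by
  suffices hdiff : Tendsto (fun i => distFun (mconv (αs i) (βs i)) t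
      - distFun (mconv α (βs i)) t) l (𝓝 0) by
    simpa using hdiff.add (hα.tendsto_distFun_mconv_right hβ hβs hβlim t)
  have hunif : TendstoUniformlyOn (fun i => distFun (αs i)) (distFun α) l (Icc 0 t) :=
    tendstoLocallyUniformly_iff_forall_isCompact.1
      (tendstoLocallyUniformly_of_monotone_of_continuous (fun i => (hαs i).monotone_distFun)
        hc hαlim) _ isCompact_Icc
  refine Metric.tendsto_nhds.2 fun ε hε => ?_
  set C := distFun β t + 1
  have hC : 0 < C := by have := distFun_nonneg β t; positivity
  filter_upwards [Metric.tendstoUniformlyOn_iff.1 hunif (ε / (2 * C)) (by positivity),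
    (hβlim t).eventually_lt_const (lt_add_one _)] with i hi hβi
  rw [Real.dist_eq, sub_zero]
  calc _ ≤ ε / (2 * C) * distFun (βs i) t :=
        (hαs i).abs_distFun_mconv_sub_le hα (hβs i) (by positivity) fun s hs => by
          rw [abs_sub_comm]; exact (hi s hs).le
    _ ≤ ε / (2 * C) * C := by gcongr
    _ < ε := by field_simp; linarith

theorem tendsto_distFun_mconvPow [l.IsCountablyGenerated]
    (hα : IsNonnegStieltjes α) (hαs : ∀ i, IsNonnegStieltjes (αs i))
    (hc : Continuous (distFun α))
    (hlim : ∀ s, Tendsto (fun i => distFun (αs i) s) l (𝓝 (distFun α s))) (j : ℕ) (t : ℝ) :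
    Tendsto (fun i => distFun (mconvPow (αs i) j) t) l (𝓝 (distFun (mconvPow α j) t)) := by
  have := hα.sFinite
  have (i : ι) := (hαs i).sFinite
  induction j generalizing t with
  | zero => exact tendsto_const_nhds
  | succ j ih =>
    simp only [mconvPow_succ]
    exact hα.tendsto_distFun_mconv (hα.mconvPow j) hαs (fun i => (hαs i).mconvPow j) hc hlim ih t

end IsNonnegStieltjes

theorem distFun_mconvPow_inv_smul (μ : Measure ℝ) [SFinite μ] {c : ℝ} (hc : 0 ≤ c) (j : ℕ) :
    distFun (mconvPow ((ENNReal.ofReal c)⁻¹ • μ) j) = fun t => convFun μ j t / c ^ j := by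
  ext t
  rw [mconvPow_smul, distFun, Measure.smul_apply, smul_eq_mul, ENNReal.toReal_mul,
    ENNReal.toReal_pow, ENNReal.toReal_inv, ENNReal.toReal_ofReal hc, convFun, inv_pow,
    inv_mul_eq_div]

theorem stmt19_general (Z : ℝ → ℝ) (μ : MeasureTheory.Measure ℝ)
    (hsupp : μ (Set.Iio 0) = 0) (hfin : ∀ t : ℝ, μ (Set.Iic t) < ⊤)
    (hrep : ∀ t : ℝ, Z t = (μ (Set.Iic t)).toReal)
    (hZ0 : Z 0 = 0) (hZcont : ContinuousOn Z (Set.Ici 0))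
    (c : ℕ → ℝ) (hcpos : ∀ n, 0 < c n)
    (X : ℕ → ℝ → ℝ) (ν : ℕ → MeasureTheory.Measure ℝ)
    (hνsupp : ∀ n, ν n (Set.Iio 0) = 0) (hνfin : ∀ n, ∀ t : ℝ, ν n (Set.Iic t) < ⊤)
    (hXrep : ∀ n, ∀ t : ℝ, X n t = (ν n (Set.Iic t)).toReal)
    (hconv : TendstoLocallyUniformlyOn (fun n u => X n u / c n) Z atTop (Set.Ici 0)) :
    ∀ j : ℕ, 1 ≤ j →
      ContinuousOn (convFun μ j) (Set.Ici 0) ∧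
      TendstoLocallyUniformlyOn (fun n u => convFun (ν n) j u / (c n) ^ j)
        (convFun μ j) atTop (Set.Ici 0) := by
  intro j hj
  have hμ : IsNonnegStieltjes μ := ⟨hsupp, hfin⟩
  have hν (n : ℕ) : IsNonnegStieltjes (ν n) := ⟨hνsupp n, hνfin n⟩
  have (n : ℕ) := (hν n).sFinite
  set κ : ℕ → Measure ℝ := fun n => (ENNReal.ofReal (c n))⁻¹ • ν n
  have hκ (n : ℕ) : IsNonnegStieltjes (κ n) :=
    (hν n).smul (ENNReal.inv_ne_top.2 (ENNReal.ofReal_pos.2 (hcpos n)).ne')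
  have hscale (k : ℕ) :
      (fun n u => convFun (ν n) k u / c n ^ k) = fun n => distFun (mconvPow (κ n) k) :=
    funext fun n => (distFun_mconvPow_inv_smul (ν n) (hcpos n).le k).symm
  have hZ : Z = distFun μ := funext hrep
  have hX : (fun n u => X n u / c n) = fun n => distFun (κ n) := by
    simpa [convFun, mconvPow, ← hXrep] using hscale 1
  have hμc : Continuous (distFun μ) := hμ.continuous_distFun (hZ ▸ hZ0) (hZ ▸ hZcont)
  have hκlim := hμ.tendsto_distFun_of_tendstoLocallyUniformlyOn hκ (hX ▸ hZ ▸ hconv)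
  have hcont := hμ.continuous_distFun_mconvPow hμc hj
  refine ⟨hcont.continuousOn, ?_⟩
  rw [hscale]
  exact (tendstoLocallyUniformly_of_monotone_of_continuous
    (fun n => ((hκ n).mconvPow j).monotone_distFun) hcont
    (hμ.tendsto_distFun_mconvPow hκ hμc hκlim j)).tendstoLocallyUniformlyOn

/-- let `Z : [0,∞) → [0,∞)` be nondecreasing and continuous with `Z(0)=0`
(represented by `Z u = μ (Iic u)`). Then every `Z^{*(j)}` is continuous on `[0,∞)`; and if
`c_n ↑ ∞` and nondecreasing `X_n` (represented by `X_n u = ν_n (Iic u)`) satisfy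
`X_n/c_n → Z` uniformly on compacts of `[0,∞)`, then `X_n^{*(j)}/c_n^j → Z^{*(j)}`
uniformly on compacts of `[0,∞)`, for each `j ≥ 1`. -/
theorem stmt19 (Z : ℝ → ℝ) (μ : MeasureTheory.Measure ℝ)
    (hsupp : μ (Set.Iio 0) = 0) (hfin : ∀ t : ℝ, μ (Set.Iic t) < ⊤)
    (hrep : ∀ t : ℝ, Z t = (μ (Set.Iic t)).toReal)
    (hZ0 : Z 0 = 0) (hZcont : ContinuousOn Z (Set.Ici 0))
    (c : ℕ → ℝ) (hcpos : ∀ n, 0 < c n) (hc : Tendsto c atTop atTop)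
    (X : ℕ → ℝ → ℝ) (ν : ℕ → MeasureTheory.Measure ℝ)
    (hνsupp : ∀ n, ν n (Set.Iio 0) = 0) (hνfin : ∀ n, ∀ t : ℝ, ν n (Set.Iic t) < ⊤)
    (hXrep : ∀ n, ∀ t : ℝ, X n t = (ν n (Set.Iic t)).toReal)
    (hconv : TendstoLocallyUniformlyOn (fun n u => X n u / c n) Z atTop (Set.Ici 0)) :
    ∀ j : ℕ, 1 ≤ j →
      ContinuousOn (convFun μ j) (Set.Ici 0) ∧
      TendstoLocallyUniformlyOn (fun n u => convFun (ν n) j u / (c n) ^ j)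
        (convFun μ j) atTop (Set.Ici 0) :=
  stmt19_general Z μ hsupp hfin hrep hZ0 hZcont c hcpos X ν hνsupp hνfin hXrep hconv
end
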